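/- arXiv:2003.02962 — 11 statements merged into one kernel-verified Lean document; each statement's English description precedes it below -/
import Mathlib

section
/- Let A_1,...,A_ℓ be N×N real matrices and T the cpo T(X) = Σ_i A_i X A_i^T. If T is rank-decreasing (there is a positive semi-definite Y with rank T(Y) < rank Y), then there exists a shrunk subspace for {A_1,...,A_ℓ}, i.e. a subspace U ≤ ℝ^N with dim U > dim(Σ_{i=1}^ℓ A_i(U)). -/
open Matrix BigOperators

/-
Write the positive semidefinite matrix as Y = C Cᵀ and take U to be the column space of C, so that
dim U = rank C = rank Y. The space Σ Aᵢ(U) is the column space of the block matrix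
B = [A₁C | ⋯ | A_ℓC], and B Bᵀ = Σ Aᵢ C Cᵀ Aᵢᵀ = T(Y). Over ℝ the rank of B Bᵀ equals the rank of B,
hence dim Σ Aᵢ(U) = rank T(Y) < rank Y = dim U.
-/

namespace Matrix

def concatCols {R m n ι : Type*} (M : ι → Matrix m n R) : Matrix m (ι × n) R :=
  of fun k p => M p.1 k p.2

section concatCols

variable {R m n ι : Type*} [Fintype n] [Fintype ι]

theorem concatCols_mulVec [NonUnitalNonAssocSemiring R] (M : ι → Matrix m n R) (x : ι × n → R) :
    concatCols M *ᵥ x = ∑ i, M i *ᵥ fun j => x (i, j) := by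
  ext k
  simp [concatCols, mulVec, dotProduct, Fintype.sum_prod_type]

theorem range_mulVecLin_concatCols [CommSemiring R] [DecidableEq ι] (M : ι → Matrix m n R) :
    LinearMap.range (concatCols M).mulVecLin = ⨆ i, LinearMap.range (M i).mulVecLin := by
  apply le_antisymm
  · rintro _ ⟨x, rfl⟩
    rw [mulVecLin_apply, concatCols_mulVec]
    exact Submodule.sum_mem _ fun i _ =>
      Submodule.mem_iSup_of_mem i (LinearMap.mem_range_self (M i).mulVecLin _)
  · refine iSup_le fun i => ?_
    rintro _ ⟨y, rfl⟩
    refine ⟨fun p => if p.1 = i then y p.2 else 0, ?_⟩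
    rw [mulVecLin_apply, concatCols_mulVec, Finset.sum_eq_single i (fun b _ hb => by simp [hb, ← Pi.zero_def])
      (by simp)]
    simp

theorem concatCols_mul_transpose [Fintype m] [NonUnitalCommSemiring R] (M : ι → Matrix m n R) :
    concatCols M * (concatCols M)ᵀ = ∑ i, M i * (M i)ᵀ := by
  ext k l
  simp [concatCols, mul_apply, Matrix.sum_apply, Fintype.sum_prod_type]

theorem finrank_iSup_range_mulVecLin [Fintype m] [Field R] [LinearOrder R] [IsStrictOrderedRing R]
    (M : ι → Matrix m n R) :
    Module.finrank R (⨆ i, LinearMap.range (M i).mulVecLin : Submodule R (m → R)) =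
      (∑ i, M i * (M i)ᵀ).rank := by
  classical
  rw [← concatCols_mul_transpose, rank_self_mul_transpose, ← range_mulVecLin_concatCols]
  rfl

end concatCols

theorem PosSemidef.exists_eq_mul_transpose {n : Type*} [Fintype n] {Y : Matrix n n ℝ}
    (hY : Y.PosSemidef) : ∃ C : Matrix n n ℝ, Y = C * Cᵀ := by
  classical
  open scoped MatrixOrder in
  obtain ⟨B, rfl⟩ := CStarAlgebra.nonneg_iff_eq_star_mul_self.mp hY.nonneg
  exact ⟨Bᵀ, by simp [star_eq_conjTranspose, conjTranspose_eq_transpose_of_trivial]⟩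

end Matrix

theorem stmt1 {N ℓ : ℕ} (A : Fin ℓ → Matrix (Fin N) (Fin N) ℝ)
    (h : ∃ Y : Matrix (Fin N) (Fin N) ℝ, Y.PosSemidef ∧
      (∑ i, A i * Y * (A i)ᵀ).rank < Y.rank) :
    ∃ U : Submodule ℝ (Fin N → ℝ),
      Module.finrank ℝ (⨆ i, U.map (A i).mulVecLin : Submodule ℝ (Fin N → ℝ)) <
        Module.finrank ℝ U := by
  obtain ⟨Y, hY, hrank⟩ := h
  obtain ⟨C, rfl⟩ := hY.exists_eq_mul_transpose
  refine ⟨LinearMap.range C.mulVecLin, ?_⟩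
  have hmap (i : Fin ℓ) : (LinearMap.range C.mulVecLin).map (A i).mulVecLin =
      LinearMap.range (A i * C).mulVecLin := by
    rw [mulVecLin_mul, LinearMap.range_comp]
  rw [iSup_congr hmap]
  calc Module.finrank ℝ (⨆ i, LinearMap.range (A i * C).mulVecLin : Submodule ℝ (Fin N → ℝ))
      = (∑ i, A i * (C * Cᵀ) * (A i)ᵀ).rank := by
        simp only [finrank_iSup_range_mulVecLin, transpose_mul, Matrix.mul_assoc]
    _ < (C * Cᵀ).rank := hrank
    _ = Module.finrank ℝ (LinearMap.range C.mulVecLin) := rank_self_mul_transpose C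
end

section
/- Let A_1,...,A_ℓ be N×N real matrices and T the cpo T(X) = Σ_i A_i X A_i^T. If U ≤ ℝ^N is a shrunk subspace for {A_1,...,A_ℓ} and Y is the matrix of orthogonal projection onto U, then Y is a rank-decreasing witness for T, i.e. rank(T(Y)) < rank(Y). Moreover rank(Y) − rank(T(Y)) ≥ dim U − dim(Σ_i A_i(U)). -/
open Matrix BigOperators

theorem Matrix.range_mulVecLin_sum_mul_mul_le {ι l m n o R : Type*} [Fintype ι] [Fintype m]
    [Fintype n] [Fintype o] [CommSemiring R]
    (A : ι → Matrix l m R) (M : Matrix m n R) (B : ι → Matrix n o R) :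
    LinearMap.range (∑ i, A i * M * B i).mulVecLin ≤
      ⨆ i, (LinearMap.range M.mulVecLin).map (A i).mulVecLin := by
  rintro _ ⟨v, rfl⟩
  rw [mulVecLin_apply, sum_mulVec]
  refine Submodule.sum_mem _ fun i _ => Submodule.mem_iSup_of_mem i ?_
  exact ⟨M *ᵥ B i *ᵥ v, ⟨B i *ᵥ v, rfl⟩,
    by simp only [mulVecLin_apply, mulVec_mulVec, Matrix.mul_assoc]⟩

theorem stmt2_general {N ℓ : ℕ} (A : Fin ℓ → Matrix (Fin N) (Fin N) ℝ)
    (U : Submodule ℝ (Fin N → ℝ))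
    (hshrunk : Module.finrank ℝ (⨆ i, U.map (A i).mulVecLin : Submodule ℝ (Fin N → ℝ)) <
      Module.finrank ℝ U)
    (Y : Matrix (Fin N) (Fin N) ℝ)
    (hrange : LinearMap.range Y.mulVecLin = U) :
    (∑ i, A i * Y * (A i)ᵀ).rank < Y.rank ∧
    Module.finrank ℝ U -
        Module.finrank ℝ (⨆ i, U.map (A i).mulVecLin : Submodule ℝ (Fin N → ℝ)) ≤
      Y.rank - (∑ i, A i * Y * (A i)ᵀ).rank := by
  have hY : Y.rank = Module.finrank ℝ U := by rw [Matrix.rank, hrange]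
  have hT : (∑ i, A i * Y * (A i)ᵀ).rank ≤
      Module.finrank ℝ (⨆ i, U.map (A i).mulVecLin : Submodule ℝ (Fin N → ℝ)) := by
    rw [← hrange]
    exact Submodule.finrank_mono (range_mulVecLin_sum_mul_mul_le A Y fun i => (A i)ᵀ)
  omega

theorem stmt2 {N ℓ : ℕ} (A : Fin ℓ → Matrix (Fin N) (Fin N) ℝ)
    (U : Submodule ℝ (Fin N → ℝ))
    (hshrunk : Module.finrank ℝ (⨆ i, U.map (A i).mulVecLin : Submodule ℝ (Fin N → ℝ)) <
      Module.finrank ℝ U)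
    (Y : Matrix (Fin N) (Fin N) ℝ)
    (hsym : Yᵀ = Y) (hidem : Y * Y = Y)
    (hrange : LinearMap.range Y.mulVecLin = U) :
    (∑ i, A i * Y * (A i)ᵀ).rank < Y.rank ∧
    Module.finrank ℝ U -
        Module.finrank ℝ (⨆ i, U.map (A i).mulVecLin : Submodule ℝ (Fin N → ℝ)) ≤
      Y.rank - (∑ i, A i * Y * (A i)ᵀ).rank :=
  stmt2_general A U hshrunk Y hrange
end

section
/- Let A_1,...,A_ℓ ∈ ℝ^{N×N}, B ∈ ℝ^{N×N}, and let W* be the limit of the second Wong sequence W_0 = 0, W_k = Σ_i A_i(B^{-1}(W_{k-1})). If W* ≤ Im B, then U := B^{-1}(W*) satisfies dim U − dim(Σ_{i=1}^ℓ A_i(U)) ≥ corank(B) = N − rank(B), i.e. U is a corank(B)-shrunk subspace for {A_1,...,A_ℓ}. -/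
open Matrix BigOperators

/-
Since `W*` is a fixed point of the Wong iteration, `Σ_i A_i(U) = W*`. As `W* ≤ Im B`, the map `B`
restricted to `U = B⁻¹(W*)` is onto `W*` with kernel `ker B ⊆ U`, so rank–nullity gives
`dim U = dim W* + dim ker B = dim Σ_i A_i(U) + corank B`.
-/

open Module LinearMap in
theorem LinearMap.finrank_comap_eq_of_le_range {K V V' : Type*} [DivisionRing K]
    [AddCommGroup V] [Module K V] [FiniteDimensional K V] [AddCommGroup V'] [Module K V']
    (f : V →ₗ[K] V') {W : Submodule K V'} (hW : W ≤ range f) :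
    finrank K (W.comap f) = finrank K W + finrank K (ker f) := by
  have hrange : range (f.domRestrict (W.comap f)) = W := by
    rw [range_domRestrict, Submodule.map_comap_eq, inf_eq_right.mpr hW]
  have hker : finrank K (ker (f.domRestrict (W.comap f))) = finrank K (ker f) := by
    rw [ker_domRestrict]
    exact (Submodule.comapSubtypeEquivOfLe (ker_le_comap f)).finrank_eq
  rw [← finrank_range_add_finrank_ker (f.domRestrict (W.comap f)), hrange, hker]

theorem Matrix.rank_add_finrank_ker_mulVecLin {K n : Type*} [Field K] [Fintype n]
    [DecidableEq n] (B : Matrix n n K) :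
    B.rank + Module.finrank K (LinearMap.ker B.mulVecLin) = Fintype.card n := by
  rw [Matrix.rank, LinearMap.finrank_range_add_finrank_ker, Module.finrank_fintype_fun_eq_card]

theorem stmt5_general {N ℓ : ℕ} (A : Fin ℓ → Matrix (Fin N) (Fin N) ℝ)
    (B : Matrix (Fin N) (Fin N) ℝ)
    (W : ℕ → Submodule ℝ (Fin N → ℝ))
    (hW : ∀ k, W (k + 1) = ⨆ i, ((W k).comap B.mulVecLin).map (A i).mulVecLin)
    (hstab : W (N + 1) = W N)
    (hIm : W N ≤ LinearMap.range B.mulVecLin) :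
    Module.finrank ℝ
        (⨆ i, ((W N).comap B.mulVecLin).map (A i).mulVecLin : Submodule ℝ (Fin N → ℝ)) +
      (N - B.rank) ≤
      Module.finrank ℝ ((W N).comap B.mulVecLin) := by
  have hfixed : (⨆ i, ((W N).comap B.mulVecLin).map (A i).mulVecLin) = W N := by
    rw [← hW N, hstab]
  have hcorank := B.rank_add_finrank_ker_mulVecLin
  rw [Fintype.card_fin] at hcorank
  rw [hfixed, LinearMap.finrank_comap_eq_of_le_range _ hIm]
  omega

theorem stmt5 {N ℓ : ℕ} (A : Fin ℓ → Matrix (Fin N) (Fin N) ℝ)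
    (B : Matrix (Fin N) (Fin N) ℝ)
    (W : ℕ → Submodule ℝ (Fin N → ℝ)) (hW0 : W 0 = ⊥)
    (hW : ∀ k, W (k + 1) = ⨆ i, ((W k).comap B.mulVecLin).map (A i).mulVecLin)
    (hstab : W (N + 1) = W N)
    (hIm : W N ≤ LinearMap.range B.mulVecLin) :
    Module.finrank ℝ
        (⨆ i, ((W N).comap B.mulVecLin).map (A i).mulVecLin : Submodule ℝ (Fin N → ℝ)) +
      (N - B.rank) ≤
      Module.finrank ℝ ((W N).comap B.mulVecLin) :=
  stmt5_general A B W hW hstab hIm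
end

section
/- Let Q be the n-subspace quiver S_n (n source vertices x_1,...,x_n, one sink y_1, arrows a_i : x_i → y_1), let v_1,...,v_n ∈ ℝ^D, and let V be the representation with V(x_i) = ℝ, V(y_1) = ℝ^D, V(a_i) = v_i. Let σ_0 = (D,...,D,−n). Then for every subrepresentation W ≤ V, setting T = W(y_1), one has σ_0 · dim W ≤ σ_0 · dim W_T, where W_T is the subrepresentation with W_T(x_i) = ℝ if v_i ∈ T and 0 otherwise, and W_T(y_1) = T. Consequently V is σ_0-semi-stable if and only if for every subspace T ≤ ℝ^D, |{i : v_i ∈ T}| ≤ (dim T / D) · n. -/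
/-! A subrepresentation `W` with sink space `T` can only have `W(xᵢ) ≠ 0` when `vᵢ ∈ T`, and then
`dim W(xᵢ) = 1`; so enlarging every `W(xᵢ)` to the whole line exactly when `vᵢ ∈ T` gives the
subrepresentation `W_T` of largest weight among those with sink space `T`. Semi-stability thus only
has to be tested on the `W_T`, where `σ₀ · dim W_T = D · #{i | vᵢ ∈ T} - n · dim T`. -/

open Matrix BigOperators
open scoped Classical

open Finset LinearMap

section SubspaceQuiver

variable {K M ι : Type*} [Field K] [AddCommGroup M] [Module K M]

theorem map_top_toSpanSingleton_le_iff {v : M} {T : Submodule K M} :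
    (⊤ : Submodule K K).map (toSpanSingleton K M v) ≤ T ↔ v ∈ T := by
  rw [Submodule.map_top, ← span_singleton_eq_range, Submodule.span_singleton_le_iff_mem]

theorem finrank_le_ite_of_map_toSpanSingleton_le {W : Submodule K K} {v : M} {T : Submodule K M}
    (h : W.map (toSpanSingleton K M v) ≤ T) :
    Module.finrank K W ≤ if v ∈ T then 1 else 0 := by
  rcases Ideal.eq_bot_or_top W with rfl | rfl
  · simp
  · rw [map_top_toSpanSingleton_le_iff] at h
    simp [h]

theorem sum_finrank_le_card_filter_mem [Fintype ι] {v : ι → M} {W : ι → Submodule K K}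
    {T : Submodule K M} (h : ∀ i, (W i).map (toSpanSingleton K M (v i)) ≤ T) :
    ∑ i, Module.finrank K (W i) ≤ #{i | v i ∈ T} := by
  rw [card_filter]
  exact sum_le_sum fun i _ => finrank_le_ite_of_map_toSpanSingleton_le (h i)

/-- The source spaces of the subrepresentation `W_T`. -/
noncomputable def subrepOfSubspace (v : ι → M) (T : Submodule K M) (i : ι) : Submodule K K :=
  if v i ∈ T then ⊤ else ⊥

theorem map_subrepOfSubspace_le (v : ι → M) (T : Submodule K M) (i : ι) :
    (subrepOfSubspace v T i).map (toSpanSingleton K M (v i)) ≤ T := by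
  by_cases hv : v i ∈ T
  · rw [subrepOfSubspace, if_pos hv]
    exact map_top_toSpanSingleton_le_iff.2 hv
  · rw [subrepOfSubspace, if_neg hv, Submodule.map_bot]
    exact bot_le

theorem sum_finrank_subrepOfSubspace [Fintype ι] (v : ι → M) (T : Submodule K M) :
    ∑ i, Module.finrank K (subrepOfSubspace v T i) = #{i | v i ∈ T} := by
  rw [card_filter]
  refine sum_congr rfl fun i _ => ?_
  by_cases hv : v i ∈ T
  · rw [subrepOfSubspace, if_pos hv, if_pos hv, finrank_top, Module.finrank_self]
  · rw [subrepOfSubspace, if_neg hv, if_neg hv, finrank_bot]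

end SubspaceQuiver

theorem natCast_le_div_mul_iff {a b c D : ℕ} (hD : 0 < D) :
    (a : ℝ) ≤ (b / D : ℝ) * c ↔ (D : ℤ) * a ≤ c * b := by
  rw [div_mul_eq_mul_div, le_div_iff₀ (by exact_mod_cast hD)]
  norm_cast
  rw [mul_comm a, mul_comm b]

theorem stmt9 {n D : ℕ} (hD : 0 < D) (v : Fin n → (Fin D → ℝ)) :
    (∀ (Wx : Fin n → Submodule ℝ ℝ) (T : Submodule ℝ (Fin D → ℝ)),
        (∀ i, (Wx i).map (LinearMap.toSpanSingleton ℝ (Fin D → ℝ) (v i)) ≤ T) →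
        (D : ℤ) * (∑ i, (Module.finrank ℝ (Wx i) : ℤ)) - n * Module.finrank ℝ T ≤
          (D : ℤ) * ((Finset.univ.filter fun i => v i ∈ T).card : ℤ) -
            n * Module.finrank ℝ T) ∧
    ((∀ (Wx : Fin n → Submodule ℝ ℝ) (T : Submodule ℝ (Fin D → ℝ)),
        (∀ i, (Wx i).map (LinearMap.toSpanSingleton ℝ (Fin D → ℝ) (v i)) ≤ T) →
        (D : ℤ) * (∑ i, (Module.finrank ℝ (Wx i) : ℤ)) - n * Module.finrank ℝ T ≤ 0) ↔
      ∀ T : Submodule ℝ (Fin D → ℝ),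
        ((Finset.univ.filter fun i => v i ∈ T).card : ℝ) ≤
          ((Module.finrank ℝ T : ℝ) / D) * n) := by
  have weight_le : ∀ (Wx : Fin n → Submodule ℝ ℝ) (T : Submodule ℝ (Fin D → ℝ)),
      (∀ i, (Wx i).map (toSpanSingleton ℝ (Fin D → ℝ) (v i)) ≤ T) →
      (D : ℤ) * (∑ i, (Module.finrank ℝ (Wx i) : ℤ)) - n * Module.finrank ℝ T ≤
        (D : ℤ) * (#{i | v i ∈ T} : ℤ) - n * Module.finrank ℝ T := fun Wx T hW => by
    gcongr
    exact_mod_cast sum_finrank_le_card_filter_mem hW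
  refine ⟨weight_le, fun h T => ?_, fun h Wx T hW => (weight_le Wx T hW).trans ?_⟩
  · have hT := h _ T (map_subrepOfSubspace_le v T)
    rw [← Nat.cast_sum, sum_finrank_subrepOfSubspace] at hT
    rw [natCast_le_div_mul_iff hD]
    linarith
  · linarith [(natCast_le_div_mul_iff hD).1 (h T)]
end

section
/- With data v_i^j ∈ ℝ^{d_j} (i ∈ [n], j ∈ [m]), D = Σ_j d_j, N = nD: let Y be an N×N positive semi-definite rank-decreasing witness for the cpo T_X associated to the data, with diagonal entries y_{r,r}. Set I = {i ∈ [n] : y_{r,r} ≠ 0 for some r ∈ ((i−1)D, iD]}, and define the subrepresentation W of V_X by W(x_i) = ℝ if i ∈ I and 0 otherwise, and W(y_j) = Span(v_i^j : i ∈ I). Then σ_0 · dim W ≥ rank(Y) − rank(T_X(Y)) > 0. -/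
open Matrix BigOperators
open scoped Classical

/-- Row index type for the SRSR Kraus operators: block `(j, q)` of height `d j`,
with `q` ranging over `n` slots per sink `j`. -/
abbrev SrsrRow (n m : ℕ) (d : Fin m → ℕ) := Σ j : Fin m, Fin n × Fin (d j)

/-- Column index type: `n` blocks of width `D`. -/
abbrev SrsrCol (n D : ℕ) := Fin n × Fin D

/-- The Kraus operator `V^{i,j}_{q,r}`: block matrix whose `((j,q),(i,r))`-block is the
column vector `v i j` and all other entries vanish. -/
noncomputable def srsrKraus {n m D : ℕ} (d : Fin m → ℕ)
    (v : ∀ (_ : Fin n) (j : Fin m), Fin (d j) → ℝ)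
    (i : Fin n) (j : Fin m) (q : Fin n) (r : Fin D) :
    Matrix (SrsrRow n m d) (SrsrCol n D) ℝ :=
  fun p c =>
    if h : p.1 = j ∧ p.2.1 = q ∧ c.1 = i ∧ c.2 = r then
      v i j (Fin.cast (congrArg d h.1) p.2.2)
    else 0

/-- The completely positive operator `T_X` associated to the partitioned data set. -/
noncomputable def srsrCPO {n m D : ℕ} (d : Fin m → ℕ)
    (v : ∀ (_ : Fin n) (j : Fin m), Fin (d j) → ℝ)
    (Y : Matrix (SrsrCol n D) (SrsrCol n D) ℝ) :
    Matrix (SrsrRow n m d) (SrsrRow n m d) ℝ :=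
  ∑ i : Fin n, ∑ j : Fin m, ∑ q : Fin n, ∑ r : Fin D,
    srsrKraus d v i j q r * Y * (srsrKraus d v i j q r)ᵀ

/-!
Since `Y` is positive semidefinite, a vanishing diagonal entry kills the whole column, so
`rank Y ≤ D · |I|`. Each Kraus term `V Y Vᵀ` equals `Y_{(i,r),(i,r)} · w wᵀ`, where `w` is `v_i^j`
placed in the block `(j, q)`; hence `T_X(Y) = ∑ s_i w_{ijq} w_{ijq}ᵀ` with
`s_i = ∑_r Y_{(i,r),(i,r)} ≥ 0` is a Gram matrix, whose rank is the dimension of the span of the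
`w_{ijq}` with `s_i ≠ 0`, i.e. with `i ∈ I`. As the `n · m` blocks are independent, this span
contains a copy of `∏_{j,q} W(y_j)`, so `rank T_X(Y) ≥ n ∑_j dim W(y_j)`.
-/

namespace Matrix

open scoped ComplexOrder

variable {n 𝕜 : Type*} [Fintype n] [RCLike 𝕜]

theorem PosSemidef.col_eq_zero_of_diag_eq_zero {A : Matrix n n 𝕜}
    (hA : A.PosSemidef) {c : n} (h : A c c = 0) : A.col c = 0 := by
  classical
  rw [← mulVec_single_one, ← hA.dotProduct_mulVec_zero_iff]
  simpa [dotProduct_single, mulVec_single_one] using h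

theorem PosSemidef.rank_le_card_diag_ne_zero {A : Matrix n n 𝕜} (hA : A.PosSemidef) :
    A.rank ≤ Fintype.card {c // A c c ≠ 0} := by
  classical
  let e : n → 𝕜 := fun c => if A c c = 0 then 0 else 1
  have hA_eq : A = A * diagonal e := by
    ext i c
    by_cases h : A c c = 0
    · simpa [e, h] using congrFun (hA.col_eq_zero_of_diag_eq_zero h) i
    · simp [e, h]
  calc A.rank = (A * diagonal e).rank := congrArg rank hA_eq
    _ ≤ (diagonal e).rank := rank_mul_le_right _ _
    _ = Fintype.card {c // A c c ≠ 0} := by simp [e, rank_diagonal]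

theorem PosSemidef.rank_le_card_mul_card {ι κ : Type*} [Fintype ι] [Fintype κ]
    {A : Matrix (ι × κ) (ι × κ) 𝕜} (hA : A.PosSemidef) (I : Finset ι)
    (hI : ∀ i r, A (i, r) (i, r) ≠ 0 → i ∈ I) :
    A.rank ≤ I.card * Fintype.card κ := by
  classical
  calc A.rank ≤ Fintype.card {c // A c c ≠ 0} := hA.rank_le_card_diag_ne_zero
    _ ≤ (I ×ˢ (Finset.univ : Finset κ)).card := by
        rw [Fintype.card_subtype]
        exact Finset.card_le_card fun c hc => by simpa using hI c.1 c.2 (by simpa using hc)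
    _ = I.card * Fintype.card κ := by simp

theorem rank_sum_smul_vecMulVec_self {ι κ : Type*} [Fintype ι] [Fintype κ]
    (c : κ → ℝ) (hc : ∀ k, 0 ≤ c k) (u : κ → ι → ℝ) :
    (∑ k, c k • vecMulVec (u k) (u k)).rank =
      Module.finrank ℝ (Submodule.span ℝ (u '' {k | c k ≠ 0})) := by
  set A : Matrix κ ι ℝ := fun k => √(c k) • u k
  have hgram : ∑ k, c k • vecMulVec (u k) (u k) = Aᵀ * A := by
    ext p p'
    simp only [sum_apply, smul_apply, vecMulVec_apply, mul_apply, transpose_apply, smul_eq_mul]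
    refine Finset.sum_congr rfl fun k _ => ?_
    simp only [A, Pi.smul_apply, smul_eq_mul]
    linear_combination -(u k p * u k p') * Real.mul_self_sqrt (hc k)
  have hspan : Submodule.span ℝ (Set.range A.row) = Submodule.span ℝ (u '' {k | c k ≠ 0}) := by
    apply le_antisymm <;> rw [Submodule.span_le]
    · rintro _ ⟨k, rfl⟩
      by_cases hk : c k = 0
      · simp [A, row, hk]
      · exact Submodule.smul_mem _ _ (Submodule.subset_span ⟨k, hk, rfl⟩)
    · rintro _ ⟨k, hk, rfl⟩
      have hsqrt : √(c k) ≠ 0 := Real.sqrt_ne_zero'.2 ((hc k).lt_of_ne' hk)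
      have hu : u k = (√(c k))⁻¹ • A k := by simp [A, smul_smul, inv_mul_cancel₀ hsqrt]
      rw [hu]
      exact Submodule.smul_mem _ _ (Submodule.subset_span ⟨k, rfl⟩)
  rw [hgram, rank_transpose_mul_self, rank_eq_finrank_span_row, hspan]

end Matrix

theorem sum_finrank_le_finrank_of_injective {K M : Type*} [Field K] [AddCommGroup M] [Module K M]
    {ι : Type*} [Fintype ι] [DecidableEq ι] {φ : ι → Type*} [∀ i, AddCommGroup (φ i)]
    [∀ i, Module K (φ i)] [∀ i, FiniteDimensional K (φ i)]
    (G : (∀ i, φ i) →ₗ[K] M) (hG : Function.Injective G) (p : ∀ i, Submodule K (φ i))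
    (U : Submodule K M) [FiniteDimensional K U]
    (hpU : ∀ i, p i ≤ U.comap (G ∘ₗ LinearMap.single K φ i)) :
    ∑ i, Module.finrank K (p i) ≤ Module.finrank K U := by
  let F : (∀ i, p i) →ₗ[K] M := G ∘ₗ LinearMap.pi fun i => (p i).subtype ∘ₗ LinearMap.proj i
  have hF : Function.Injective F := hG.comp fun x y h => funext fun i => Subtype.ext (congrFun h i)
  have hFU : ∀ x, F x ∈ U := by
    intro x
    have : F x = ∑ i, (G ∘ₗ LinearMap.single K φ i) (x i) := by
      simp only [F, LinearMap.comp_apply, LinearMap.coe_single, ← map_sum, Finset.univ_sum_single]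
      rfl
    rw [this]
    exact Submodule.sum_mem _ fun i _ => hpU i (x i).2
  rw [← Module.finrank_pi_fintype]
  exact LinearMap.finrank_le_finrank_of_injective (f := F.codRestrict U hFU)
    fun x y h => hF (congrArg Subtype.val h)

section Srsr

variable {n m D : ℕ} (d : Fin m → ℕ) (v : ∀ (_ : Fin n) (j : Fin m), Fin (d j) → ℝ)

variable (n) in
def srsrBlockEmbed : (∀ jq : Fin m × Fin n, Fin (d jq.1) → ℝ) →ₗ[ℝ] (SrsrRow n m d → ℝ) where
  toFun g p := g (p.1, p.2.1) p.2.2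
  map_add' _ _ := rfl
  map_smul' _ _ := rfl

theorem srsrBlockEmbed_injective : Function.Injective (srsrBlockEmbed n d) := by
  intro g h hgh
  funext ⟨j, q⟩ a
  exact congrFun hgh ⟨j, q, a⟩

/-- The nonzero column of the Kraus operator `V^{i,j}_{q,r}`. -/
def srsrBlockVec (i : Fin n) (j : Fin m) (q : Fin n) : SrsrRow n m d → ℝ :=
  srsrBlockEmbed n d (Pi.single (j, q) (v i j))

theorem srsrKraus_eq_vecMulVec (i : Fin n) (j : Fin m) (q : Fin n) (r : Fin D) :
    srsrKraus d v i j q r = vecMulVec (srsrBlockVec d v i j q) (Pi.single (i, r) 1) := by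
  ext ⟨j', q', a⟩ ⟨i', r'⟩
  simp only [srsrKraus, srsrBlockVec, vecMulVec_apply, srsrBlockEmbed, LinearMap.coe_mk,
    AddHom.coe_mk]
  by_cases hjq : j' = j ∧ q' = q
  · obtain ⟨rfl, rfl⟩ := hjq
    by_cases hc : i' = i ∧ r' = r
    · obtain ⟨rfl, rfl⟩ := hc
      simp
    · simp [hc]
  · have hne : (j', q') ≠ (j, q) := fun h => hjq (Prod.mk.inj h)
    rw [Pi.single_eq_of_ne hne, dif_neg fun h => hjq ⟨h.1, h.2.1⟩, Pi.zero_apply, zero_mul]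

theorem srsrKraus_mul_mul_transpose (Y : Matrix (SrsrCol n D) (SrsrCol n D) ℝ)
    (i : Fin n) (j : Fin m) (q : Fin n) (r : Fin D) :
    srsrKraus d v i j q r * Y * (srsrKraus d v i j q r)ᵀ =
      Y (i, r) (i, r) • vecMulVec (srsrBlockVec d v i j q) (srsrBlockVec d v i j q) := by
  rw [srsrKraus_eq_vecMulVec, transpose_vecMulVec, vecMulVec_mul, vecMulVec_mul_vecMulVec,
    single_one_vecMul, dotProduct_single_one, row_apply, vecMulVec_smul]

theorem srsrCPO_eq_sum (Y : Matrix (SrsrCol n D) (SrsrCol n D) ℝ) :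
    srsrCPO d v Y = ∑ t : Fin n × Fin m × Fin n,
      (∑ r, Y (t.1, r) (t.1, r)) •
        vecMulVec (srsrBlockVec d v t.1 t.2.1 t.2.2) (srsrBlockVec d v t.1 t.2.1 t.2.2) := by
  simp only [srsrCPO, srsrKraus_mul_mul_transpose, ← Finset.sum_smul, Fintype.sum_prod_type]

theorem card_mul_sum_finrank_span_le_rank_srsrCPO {Y : Matrix (SrsrCol n D) (SrsrCol n D) ℝ}
    (hY : Y.PosSemidef) (I : Finset (Fin n)) (hI : ∀ i ∈ I, ∃ r, Y (i, r) (i, r) ≠ 0) :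
    n * ∑ j, Module.finrank ℝ (Submodule.span ℝ {x | ∃ i ∈ I, x = v i j}) ≤
      (srsrCPO d v Y).rank := by
  have hdiag_pos : ∀ i ∈ I, 0 < ∑ r, Y (i, r) (i, r) := fun i hi =>
    let ⟨r, hr⟩ := hI i hi
    Finset.sum_pos' (fun _ _ => hY.diag_nonneg) ⟨r, Finset.mem_univ _, hY.diag_nonneg.lt_of_ne' hr⟩
  have hcount (g : Fin m → ℕ) : n * ∑ j, g j = ∑ jq : Fin m × Fin n, g jq.1 := by
    simp [Fintype.sum_prod_type_right]
  rw [hcount, srsrCPO_eq_sum,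
    rank_sum_smul_vecMulVec_self _ fun _ => Finset.sum_nonneg fun _ _ => hY.diag_nonneg]
  refine sum_finrank_le_finrank_of_injective _ (srsrBlockEmbed_injective d)
    (fun jq => Submodule.span ℝ {x | ∃ i ∈ I, x = v i jq.1}) _ fun ⟨j, q⟩ => ?_
  rw [Submodule.span_le]
  rintro _ ⟨i, hi, rfl⟩
  exact Submodule.subset_span ⟨(i, j, q), (hdiag_pos i hi).ne', rfl⟩

end Srsr

theorem stmt12_general {n m D : ℕ} (d : Fin m → ℕ)
    (v : ∀ (_ : Fin n) (j : Fin m), Fin (d j) → ℝ)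
    (Y : Matrix (SrsrCol n D) (SrsrCol n D) ℝ) (hpsd : Y.PosSemidef)
    (hwit : (srsrCPO d v Y).rank < Y.rank)
    (I : Finset (Fin n))
    (hI : I = Finset.univ.filter fun i => ∃ r : Fin D, Y (i, r) (i, r) ≠ 0)
    (Wy : ∀ j : Fin m, Submodule ℝ (Fin (d j) → ℝ))
    (hWy : ∀ j, Wy j = Submodule.span ℝ {x | ∃ i ∈ I, x = v i j}) :
    ((Y.rank : ℤ) - (srsrCPO d v Y).rank ≤
        (D : ℤ) * I.card - n * (∑ j, (Module.finrank ℝ (Wy j) : ℤ))) ∧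
      0 < (D : ℤ) * I.card - n * (∑ j, (Module.finrank ℝ (Wy j) : ℤ)) := by
  obtain rfl : Wy = fun j => Submodule.span ℝ {x | ∃ i ∈ I, x = v i j} := funext hWy
  have hY : Y.rank ≤ I.card * D := by
    simpa using hpsd.rank_le_card_mul_card I fun i r hr => by simpa [hI] using ⟨r, hr⟩
  have hT := card_mul_sum_finrank_span_le_rank_srsrCPO d v hpsd I fun i hi => by
    simpa [hI] using hi
  zify at hY hT hwit
  constructor <;> linarith

theorem stmt12 {n m D : ℕ} (d : Fin m → ℕ) (hD : D = ∑ j, d j)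
    (v : ∀ (_ : Fin n) (j : Fin m), Fin (d j) → ℝ)
    (Y : Matrix (SrsrCol n D) (SrsrCol n D) ℝ) (hpsd : Y.PosSemidef)
    (hwit : (srsrCPO d v Y).rank < Y.rank)
    (I : Finset (Fin n))
    (hI : I = Finset.univ.filter fun i => ∃ r : Fin D, Y (i, r) (i, r) ≠ 0)
    (Wy : ∀ j : Fin m, Submodule ℝ (Fin (d j) → ℝ))
    (hWy : ∀ j, Wy j = Submodule.span ℝ {x | ∃ i ∈ I, x = v i j}) :
    ((Y.rank : ℤ) - (srsrCPO d v Y).rank ≤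
        (D : ℤ) * I.card - n * (∑ j, (Module.finrank ℝ (Wy j) : ℤ))) ∧
      0 < (D : ℤ) * I.card - n * (∑ j, (Module.finrank ℝ (Wy j) : ℤ)) :=
  stmt12_general d v Y hpsd hwit I hI Wy hWy
end

section
/- With the SRSR setup: for the cpo T_X and any positive semi-definite N×N matrix Y with block diagonal entries y_{r,r} (r ∈ ((i−1)D, iD], i ∈ [n]), the operator value T_X(Y) is an (mn)×(mn) block diagonal matrix whose (q,q)-block, for q ∈ ((j−1)n, jn], equals Σ_{i=1}^n v_i^j (Σ_{r ∈ ((i−1)D, iD]} y_{r,r}) (v_i^j)^T. Consequently rank(T_X(Y)) = Σ_{j=1}^m n · rank(Σ_{i=1}^n v_i^j (Σ_r y_{r,r}) (v_i^j)^T). -/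
open Matrix BigOperators
open scoped Classical

/-!
Each Kraus operator `V^{i,j}_{q,r}` has a single nonzero column, `v_i^j` placed in row block
`(j, q)` at column `(i, r)`, so `V Y Vᵀ` only sees the diagonal entry `Y (i, r) (i, r)` and lands
in the diagonal block `(j, q)`. Summing, `T_X(Y)` is block diagonal with a `(j, q)`-block
independent of `q`, and the rank of a block diagonal matrix is the sum of the ranks of its blocks.
-/

theorem LinearMap.finrank_range_piMap {K ι : Type*} [Field K] [Fintype ι]
    {φ ψ : ι → Type*} [∀ i, AddCommGroup (φ i)] [∀ i, Module K (φ i)]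
    [∀ i, FiniteDimensional K (φ i)] [∀ i, AddCommGroup (ψ i)] [∀ i, Module K (ψ i)]
    (f : ∀ i, φ i →ₗ[K] ψ i) :
    Module.finrank K (LinearMap.range (LinearMap.piMap f)) =
      ∑ i, Module.finrank K (LinearMap.range (f i)) := by
  have hfactor : LinearMap.piMap f =
      LinearMap.piMap (fun i => (LinearMap.range (f i)).subtype) ∘ₗ
        LinearMap.piMap (fun i => (f i).rangeRestrict) := rfl
  rw [hfactor, LinearMap.range_comp_of_range_eq_top _ (LinearMap.range_eq_top.2
      (Function.Surjective.piMap fun i => (f i).surjective_rangeRestrict)),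
    LinearMap.finrank_range_of_inj (Function.Injective.piMap fun i => Subtype.val_injective),
    Module.finrank_pi_fintype]

theorem Matrix.blockDiagonal'_mulVec_apply {R ι : Type*} [CommSemiring R] [Fintype ι]
    [DecidableEq ι] {m n : ι → Type*} [∀ i, Fintype (n i)]
    (M : ∀ i, Matrix (m i) (n i) R) (x : (Σ i, n i) → R) (i : ι) (a : m i) :
    (blockDiagonal' M *ᵥ x) ⟨i, a⟩ = (M i *ᵥ fun b => x ⟨i, b⟩) a := by
  simp only [mulVec, dotProduct, Fintype.sum_sigma]
  rw [Finset.sum_eq_single i]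
  · simp [blockDiagonal'_apply]
  · intro i' _ hi'
    exact Finset.sum_eq_zero fun b _ => by
      rw [blockDiagonal'_apply, dif_neg fun h => hi' h.symm, zero_mul]
  · simp

theorem Matrix.rank_blockDiagonal' {K ι : Type*} [Field K] [Fintype ι] [DecidableEq ι]
    {m n : ι → Type*} [∀ i, Fintype (m i)] [∀ i, Fintype (n i)]
    (M : ∀ i, Matrix (m i) (n i) K) :
    (blockDiagonal' M).rank = ∑ i, (M i).rank := by
  let eₙ := LinearEquiv.piCurry K (fun i (_ : n i) => K)
  let eₘ := LinearEquiv.piCurry K (fun i (_ : m i) => K)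
  have hfactor : (blockDiagonal' M).mulVecLin =
      eₘ.symm.toLinearMap ∘ₗ LinearMap.piMap (fun i => (M i).mulVecLin) ∘ₗ eₙ.toLinearMap :=
    LinearMap.ext fun x => funext fun ⟨i, a⟩ => blockDiagonal'_mulVec_apply M x i a
  rw [Matrix.rank, hfactor, LinearMap.range_comp, LinearEquiv.finrank_map_eq,
    LinearMap.range_comp_of_range_eq_top _ eₙ.range, LinearMap.finrank_range_piMap]
  rfl

section Srsr

variable {n m D : ℕ} (d : Fin m → ℕ) (v : ∀ (_ : Fin n) (j : Fin m), Fin (d j) → ℝ)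

theorem srsrKraus_apply (i : Fin n) (j₀ : Fin m) (q₀ : Fin n) (r : Fin D)
    (j : Fin m) (q : Fin n) (a : Fin (d j)) (c : SrsrCol n D) :
    srsrKraus d v i j₀ q₀ r ⟨j, q, a⟩ c =
      if j₀ = j ∧ q₀ = q ∧ c = (i, r) then v i j a else 0 := by
  unfold srsrKraus
  by_cases h : j₀ = j ∧ q₀ = q ∧ c = (i, r)
  · obtain ⟨rfl, rfl, rfl⟩ := h
    simp
  · rw [if_neg h, dif_neg]
    rintro ⟨hj, hq, hi, hr⟩
    exact h ⟨hj.symm, hq.symm, Prod.ext hi hr⟩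

theorem srsrKraus_mul_mul_transpose_apply (i : Fin n) (j₀ : Fin m) (q₀ : Fin n) (r : Fin D)
    (Y : Matrix (SrsrCol n D) (SrsrCol n D) ℝ)
    (j j' : Fin m) (q q' : Fin n) (a : Fin (d j)) (b : Fin (d j')) :
    (srsrKraus d v i j₀ q₀ r * Y * (srsrKraus d v i j₀ q₀ r)ᵀ) ⟨j, q, a⟩ ⟨j', q', b⟩ =
      if j₀ = j ∧ q₀ = q ∧ j₀ = j' ∧ q₀ = q' then v i j a * Y (i, r) (i, r) * v i j' b
      else 0 := by
  simp only [Matrix.mul_apply, srsrKraus_apply, ite_and, ite_mul, zero_mul,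
    Finset.sum_ite_irrel, Finset.sum_ite_eq', Finset.mem_univ, ↓reduceIte,
    Finset.sum_const_zero, transpose_apply, mul_ite, mul_zero]
  split_ifs <;> simp_all

theorem srsrCPO_apply (Y : Matrix (SrsrCol n D) (SrsrCol n D) ℝ)
    (j j' : Fin m) (q q' : Fin n) (a : Fin (d j)) (b : Fin (d j')) :
    srsrCPO d v Y ⟨j, q, a⟩ ⟨j', q', b⟩ =
      if j = j' ∧ q = q' then
        ∑ i : Fin n, (∑ r : Fin D, Y (i, r) (i, r)) * (v i j a * v i j' b)
      else 0 := by
  simp only [srsrCPO, Matrix.sum_apply, srsrKraus_mul_mul_transpose_apply, ite_and,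
    Finset.sum_ite_irrel, Finset.sum_const_zero, Finset.sum_ite_eq', Finset.mem_univ,
    ↓reduceIte]
  split_ifs
  · refine Finset.sum_congr rfl fun i _ => ?_
    rw [Finset.sum_mul]
    exact Finset.sum_congr rfl fun r _ => by ring
  all_goals rfl

noncomputable def srsrBlock (Y : Matrix (SrsrCol n D) (SrsrCol n D) ℝ) (j : Fin m) :
    Matrix (Fin (d j)) (Fin (d j)) ℝ :=
  ∑ i : Fin n, (∑ r : Fin D, Y (i, r) (i, r)) • vecMulVec (v i j) (v i j)

def srsrRowEquiv : SrsrRow n m d ≃ Σ p : Fin m × Fin n, Fin (d p.1) where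
  toFun x := ⟨(x.1, x.2.1), x.2.2⟩
  invFun x := ⟨x.1.1, x.1.2, x.2⟩
  left_inv _ := rfl
  right_inv _ := rfl

theorem srsrCPO_eq_submatrix_blockDiagonal' (Y : Matrix (SrsrCol n D) (SrsrCol n D) ℝ) :
    srsrCPO d v Y = (blockDiagonal' fun p : Fin m × Fin n => srsrBlock d v Y p.1).submatrix
      (srsrRowEquiv d) (srsrRowEquiv d) := by
  ext ⟨j, q, a⟩ ⟨j', q', b⟩
  rw [srsrCPO_apply, submatrix_apply, srsrRowEquiv, Equiv.coe_fn_mk, blockDiagonal'_apply']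
  by_cases h : j = j' ∧ q = q'
  · obtain ⟨rfl, rfl⟩ := h
    simp [srsrBlock, Matrix.sum_apply, vecMulVec_apply]
  · rw [if_neg h, dif_neg (by simpa [Prod.ext_iff] using h)]

theorem rank_srsrCPO (Y : Matrix (SrsrCol n D) (SrsrCol n D) ℝ) :
    (srsrCPO d v Y).rank = ∑ j : Fin m, n * (srsrBlock d v Y j).rank := by
  rw [srsrCPO_eq_submatrix_blockDiagonal', rank_submatrix, rank_blockDiagonal',
    Fintype.sum_prod_type]
  refine Finset.sum_congr rfl fun j _ => ?_
  change ∑ _q : Fin n, (srsrBlock d v Y j).rank = _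
  rw [Finset.sum_const, Finset.card_univ, Fintype.card_fin, smul_eq_mul]

end Srsr

theorem stmt13_general {n m D : ℕ} (d : Fin m → ℕ)
    (v : ∀ (_ : Fin n) (j : Fin m), Fin (d j) → ℝ)
    (Y : Matrix (SrsrCol n D) (SrsrCol n D) ℝ) :
    (∀ (j j' : Fin m) (q q' : Fin n) (a : Fin (d j)) (b : Fin (d j')),
        srsrCPO d v Y ⟨j, q, a⟩ ⟨j', q', b⟩ =
          if j = j' ∧ q = q' then
            ∑ i : Fin n, (∑ r : Fin D, Y (i, r) (i, r)) * (v i j a * v i j' b)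
          else 0) ∧
      (srsrCPO d v Y).rank =
        ∑ j : Fin m, n *
          (∑ i : Fin n, (∑ r : Fin D, Y (i, r) (i, r)) •
            vecMulVec (v i j) (v i j)).rank :=
  ⟨srsrCPO_apply d v Y, rank_srsrCPO d v Y⟩

theorem stmt13 {n m D : ℕ} (d : Fin m → ℕ) (hD : D = ∑ j, d j)
    (v : ∀ (_ : Fin n) (j : Fin m), Fin (d j) → ℝ)
    (Y : Matrix (SrsrCol n D) (SrsrCol n D) ℝ) (hpsd : Y.PosSemidef) :
    (∀ (j j' : Fin m) (q q' : Fin n) (a : Fin (d j)) (b : Fin (d j')),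
        srsrCPO d v Y ⟨j, q, a⟩ ⟨j', q', b⟩ =
          if j = j' ∧ q = q' then
            ∑ i : Fin n, (∑ r : Fin D, Y (i, r) (i, r)) * (v i j a * v i j' b)
          else 0) ∧
      (srsrCPO d v Y).rank =
        ∑ j : Fin m, n *
          (∑ i : Fin n, (∑ r : Fin D, Y (i, r) (i, r)) •
            vecMulVec (v i j) (v i j)).rank :=
  stmt13_general d v Y
end

section
/- Let Q be a bipartite quiver with sources x_1,...,x_n and sinks y_1,...,y_m, (V, σ) a quiver datum with σ positive on sources, negative on sinks, and σ·dim V = 0, and let A_{V,σ} = {A_1,...,A_L} be the associated Kraus operators. If W ≤ V is a subrepresentation, and Y is built from W as the block diagonal positive semi-definite matrix with blocks Y_r = Σ_l u_l^i (u_l^i)^T (orthonormal bases of W(x_i), repeated σ(x_i) times), then rank(Y) − rank(T_{V,σ}(Y)) ≥ σ · dim W. -/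
open Matrix BigOperators
open scoped Classical

/-- Row index type for the Brascamp–Lieb Kraus operators: for each sink `j` there are
`σm j` blocks, each of height `dy j`. -/
abbrev BLRow (m : ℕ) (σm dy : Fin m → ℕ) := Σ j : Fin m, Fin (σm j) × Fin (dy j)

/-- Column index type: for each source `i` there are `σp i` blocks, each of width `dx i`. -/
abbrev BLCol (n : ℕ) (σp dx : Fin n → ℕ) := Σ i : Fin n, Fin (σp i) × Fin (dx i)

/-- The Kraus operator `V^{i,j,a}_{q,r}` of a bipartite quiver datum: block matrix whose
`((j,q),(i,r))`-block is the matrix `V(a)` and all other entries vanish. -/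
noncomputable def blKraus {n m : ℕ} (σp dx : Fin n → ℕ) (σm dy : Fin m → ℕ)
    (na : Fin n → Fin m → ℕ)
    (V : ∀ (i : Fin n) (j : Fin m), Fin (na i j) → Matrix (Fin (dy j)) (Fin (dx i)) ℝ)
    (i : Fin n) (j : Fin m) (a : Fin (na i j)) (q : Fin (σm j)) (r : Fin (σp i)) :
    Matrix (BLRow m σm dy) (BLCol n σp dx) ℝ :=
  fun p c =>
    if h : p.1 = j ∧ c.1 = i then
      if Fin.cast (congrArg σm h.1) p.2.1 = q ∧ Fin.cast (congrArg σp h.2) c.2.1 = r then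
        V i j a (Fin.cast (congrArg dy h.1) p.2.2) (Fin.cast (congrArg dx h.2) c.2.2)
      else 0
    else 0

/-- The Brascamp–Lieb completely positive operator `T_{V,σ}` of a bipartite quiver datum. -/
noncomputable def blCPO {n m : ℕ} (σp dx : Fin n → ℕ) (σm dy : Fin m → ℕ)
    (na : Fin n → Fin m → ℕ)
    (V : ∀ (i : Fin n) (j : Fin m), Fin (na i j) → Matrix (Fin (dy j)) (Fin (dx i)) ℝ)
    (Y : Matrix (BLCol n σp dx) (BLCol n σp dx) ℝ) :
    Matrix (BLRow m σm dy) (BLRow m σm dy) ℝ :=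
  ∑ i : Fin n, ∑ j : Fin m, ∑ a : Fin (na i j), ∑ q : Fin (σm j), ∑ r : Fin (σp i),
    blKraus σp dx σm dy na V i j a q r * Y * (blKraus σp dx σm dy na V i j a q r)ᵀ

/-!
Let `blockSubmodule σ d W` consist of the vectors whose `(i, r)`-block lies in `W i` for every
copy `r`; it has dimension `∑ i, σ i * dim W i`. The matrix `Y` is the orthogonal projection onto
`blockSubmodule σp dx Wx`, which gives `∑ σ₊(xᵢ) dim W(xᵢ) ≤ rank Y`. Because `W` is a
subrepresentation, each Kraus operator maps `blockSubmodule σp dx Wx`, which contains the range of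
`Y`, into `blockSubmodule σm dy Wy`; hence the range of `T(Y) = ∑ A Y Aᵀ` lies in the latter and
`rank T(Y) ≤ ∑ σ₋(yⱼ) dim W(yⱼ)`.
-/

section Blocks

variable {K ι : Type*} [Field K] (σ d : ι → ℕ)

def blockEmbedding (W : ∀ i, Submodule K (Fin (d i) → K)) :
    (∀ t : Σ i, Fin (σ i), W t.1) →ₗ[K] (Σ i, Fin (σ i) × Fin (d i)) → K where
  toFun g p := (g ⟨p.1, p.2.1⟩ : Fin (d p.1) → K) p.2.2
  map_add' _ _ := rfl
  map_smul' _ _ := rfl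

def blockSubmodule (W : ∀ i, Submodule K (Fin (d i) → K)) :
    Submodule K ((Σ i, Fin (σ i) × Fin (d i)) → K) :=
  LinearMap.range (blockEmbedding σ d W)

variable {σ d}

theorem mem_blockSubmodule {W : ∀ i, Submodule K (Fin (d i) → K)}
    {z : (Σ i, Fin (σ i) × Fin (d i)) → K} :
    z ∈ blockSubmodule σ d W ↔ ∀ i r, (fun e => z ⟨i, (r, e)⟩) ∈ W i := by
  constructor
  · rintro ⟨g, rfl⟩ i r
    exact (g ⟨i, r⟩).property
  · intro hz
    exact ⟨fun t => ⟨_, hz t.1 t.2⟩, rfl⟩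

theorem blockEmbedding_injective (W : ∀ i, Submodule K (Fin (d i) → K)) :
    Function.Injective (blockEmbedding σ d W) := by
  intro g g' h
  funext t
  exact Subtype.ext (funext fun e => congrFun h (⟨t.1, (t.2, e)⟩ : Σ i, Fin (σ i) × Fin (d i)))

theorem finrank_blockSubmodule [Fintype ι] (W : ∀ i, Submodule K (Fin (d i) → K)) :
    Module.finrank K (blockSubmodule σ d W) = ∑ i, σ i * Module.finrank K (W i) := by
  rw [blockSubmodule, LinearMap.finrank_range_of_inj (blockEmbedding_injective W),
    Module.finrank_pi_fintype, Fintype.sum_sigma]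
  exact Finset.sum_congr rfl fun i _ => (Finset.sum_const (Module.finrank K (W i))).trans (by simp)

end Blocks

theorem sum_dotProduct_smul_of_mem_span {R κ ι : Type*} [CommSemiring R] [Fintype κ]
    [DecidableEq κ] [Fintype ι] (u : κ → ι → R)
    (hu : ∀ l l', u l ⬝ᵥ u l' = if l = l' then 1 else 0) {x : ι → R}
    (hx : x ∈ Submodule.span R (Set.range u)) :
    ∑ l, (u l ⬝ᵥ x) • u l = x := by
  obtain ⟨c, rfl⟩ := (Submodule.mem_span_range_iff_exists_fun R).mp hx
  refine Finset.sum_congr rfl fun l _ => ?_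
  simp [dotProduct_sum, dotProduct_smul, hu]

section BlockGram

variable {ι : Type*} [Fintype ι] [DecidableEq ι] (σ d : ι → ℕ) {f : ι → ℕ}

noncomputable def blockGram (u : ∀ i, Fin (f i) → Fin (d i) → ℝ) :
    Matrix (Σ i, Fin (σ i) × Fin (d i)) (Σ i, Fin (σ i) × Fin (d i)) ℝ :=
  fun p c =>
    if h : p.1 = c.1 then
      if Fin.cast (congrArg σ h) p.2.1 = c.2.1 then
        ∑ l : Fin (f c.1), u p.1 (Fin.cast (congrArg f h).symm l) p.2.2 * u c.1 l c.2.2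
      else 0
    else 0

variable {σ d}

theorem blockGram_mulVec_block (u : ∀ i, Fin (f i) → Fin (d i) → ℝ)
    (w : (Σ i, Fin (σ i) × Fin (d i)) → ℝ) (i : ι) (r : Fin (σ i)) :
    (fun e => (blockGram σ d u *ᵥ w) ⟨i, (r, e)⟩) =
      ∑ l, (u i l ⬝ᵥ fun e => w ⟨i, (r, e)⟩) • u i l := by
  funext e
  simp only [mulVec, dotProduct, blockGram, Finset.sum_apply, Pi.smul_apply, smul_eq_mul]
  rw [← Finset.univ_sigma_univ, Finset.sum_sigma, Finset.sum_eq_single i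
    (fun i' _ hne => Finset.sum_eq_zero fun _ _ => by simp [Ne.symm hne]) (by simp)]
  simp only [↓reduceDIte, Fin.cast_eq_self, ite_mul, Finset.sum_mul, zero_mul,
    Fintype.sum_prod_type, Finset.sum_ite_irrel, Finset.sum_const_zero, Finset.sum_ite_eq,
    Finset.mem_univ, ↓reduceIte]
  rw [Finset.sum_comm]
  exact Finset.sum_congr rfl fun _ _ => Finset.sum_congr rfl fun _ _ => by ring

theorem blockGram_mulVec_mem {u : ∀ i, Fin (f i) → Fin (d i) → ℝ}
    {W : ∀ i, Submodule ℝ (Fin (d i) → ℝ)} (hu : ∀ i l, u i l ∈ W i)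
    (w : (Σ i, Fin (σ i) × Fin (d i)) → ℝ) : blockGram σ d u *ᵥ w ∈ blockSubmodule σ d W := by
  refine mem_blockSubmodule.mpr fun i r => ?_
  rw [blockGram_mulVec_block]
  exact Submodule.sum_mem _ fun l _ => Submodule.smul_mem _ _ (hu i l)

theorem blockGram_mulVec_of_mem {u : ∀ i, Fin (f i) → Fin (d i) → ℝ}
    (hu : ∀ i (l l' : Fin (f i)), u i l ⬝ᵥ u i l' = if l = l' then 1 else 0)
    {W : ∀ i, Submodule ℝ (Fin (d i) → ℝ)} (hW : ∀ i, W i ≤ Submodule.span ℝ (Set.range (u i)))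
    {z : (Σ i, Fin (σ i) × Fin (d i)) → ℝ} (hz : z ∈ blockSubmodule σ d W) :
    blockGram σ d u *ᵥ z = z := by
  funext ⟨i, r, e⟩
  exact (congrFun (blockGram_mulVec_block u z i r) e).trans <| congrFun
    (sum_dotProduct_smul_of_mem_span (u i) (hu i) (hW i (mem_blockSubmodule.mp hz i r))) e

theorem sum_mul_finrank_le_rank_blockGram {u : ∀ i, Fin (f i) → Fin (d i) → ℝ}
    (hu : ∀ i (l l' : Fin (f i)), u i l ⬝ᵥ u i l' = if l = l' then 1 else 0)
    {W : ∀ i, Submodule ℝ (Fin (d i) → ℝ)} (hW : ∀ i, W i ≤ Submodule.span ℝ (Set.range (u i))) :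
    ∑ i, σ i * Module.finrank ℝ (W i) ≤ (blockGram σ d u).rank := by
  rw [← finrank_blockSubmodule]
  exact Submodule.finrank_mono fun z hz => ⟨z, blockGram_mulVec_of_mem hu hW hz⟩

end BlockGram

section Kraus

variable {n m : ℕ} {σp dx : Fin n → ℕ} {σm dy : Fin m → ℕ} {na : Fin n → Fin m → ℕ}
  {V : ∀ (i : Fin n) (j : Fin m), Fin (na i j) → Matrix (Fin (dy j)) (Fin (dx i)) ℝ}

theorem blKraus_mulVec_block_self (i : Fin n) (j : Fin m) (a : Fin (na i j)) (q : Fin (σm j))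
    (r : Fin (σp i)) (z : BLCol n σp dx → ℝ) :
    (fun e => (blKraus σp dx σm dy na V i j a q r *ᵥ z) ⟨j, (q, e)⟩) =
      V i j a *ᵥ fun e => z ⟨i, (r, e)⟩ := by
  funext e
  simp only [mulVec, dotProduct, blKraus]
  rw [← Finset.univ_sigma_univ, Finset.sum_sigma, Finset.sum_eq_single i
    (fun i' _ hne => Finset.sum_eq_zero fun _ _ => by simp [hne]) (by simp)]
  simp [Fintype.sum_prod_type]

theorem blKraus_mulVec_of_ne {i : Fin n} {j : Fin m} (a : Fin (na i j)) {q : Fin (σm j)}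
    (r : Fin (σp i)) {j' : Fin m} {q' : Fin (σm j')}
    (hne : (⟨j', q'⟩ : Σ j, Fin (σm j)) ≠ ⟨j, q⟩) (e : Fin (dy j')) (z : BLCol n σp dx → ℝ) :
    (blKraus σp dx σm dy na V i j a q r *ᵥ z) ⟨j', (q', e)⟩ = 0 := by
  refine Finset.sum_eq_zero fun c _ => ?_
  simp only [blKraus]
  split_ifs with h h'
  · revert h'
    obtain ⟨rfl, -⟩ := h
    rintro h'
    rw [Fin.cast_eq_self] at h'
    exact absurd (by rw [h'.1]) hne
  all_goals simp

theorem blKraus_mulVec_mem {Wx : ∀ i, Submodule ℝ (Fin (dx i) → ℝ)}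
    {Wy : ∀ j, Submodule ℝ (Fin (dy j) → ℝ)} {i : Fin n} {j : Fin m} {a : Fin (na i j)}
    (hV : (Wx i).map (V i j a).mulVecLin ≤ Wy j) (q : Fin (σm j)) (r : Fin (σp i))
    {z : BLCol n σp dx → ℝ} (hz : z ∈ blockSubmodule σp dx Wx) :
    blKraus σp dx σm dy na V i j a q r *ᵥ z ∈ blockSubmodule σm dy Wy := by
  refine mem_blockSubmodule.mpr fun j' q' => ?_
  by_cases h : (⟨j', q'⟩ : Σ j, Fin (σm j)) = ⟨j, q⟩
  · obtain ⟨rfl, rfl⟩ := Sigma.mk.inj_iff.mp h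
    rw [blKraus_mulVec_block_self]
    exact hV ⟨_, mem_blockSubmodule.mp hz i r, rfl⟩
  · simp only [blKraus_mulVec_of_ne a r h]
    exact zero_mem _

theorem range_blCPO_le {Wx : ∀ i, Submodule ℝ (Fin (dx i) → ℝ)}
    {Wy : ∀ j, Submodule ℝ (Fin (dy j) → ℝ)}
    (hV : ∀ i j (a : Fin (na i j)), (Wx i).map (V i j a).mulVecLin ≤ Wy j)
    {Y : Matrix (BLCol n σp dx) (BLCol n σp dx) ℝ} (hY : ∀ w, Y *ᵥ w ∈ blockSubmodule σp dx Wx) :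
    LinearMap.range (blCPO σp dx σm dy na V Y).mulVecLin ≤ blockSubmodule σm dy Wy := by
  rintro _ ⟨v, rfl⟩
  simp only [mulVecLin_apply, blCPO, sum_mulVec]
  refine Submodule.sum_mem _ fun i _ => Submodule.sum_mem _ fun j _ =>
    Submodule.sum_mem _ fun a _ => Submodule.sum_mem _ fun q _ => Submodule.sum_mem _ fun r _ => ?_
  rw [← mulVec_mulVec, ← mulVec_mulVec]
  exact blKraus_mulVec_mem (hV i j a) q r (hY _)

theorem rank_blCPO_le {Wx : ∀ i, Submodule ℝ (Fin (dx i) → ℝ)}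
    {Wy : ∀ j, Submodule ℝ (Fin (dy j) → ℝ)}
    (hV : ∀ i j (a : Fin (na i j)), (Wx i).map (V i j a).mulVecLin ≤ Wy j)
    {Y : Matrix (BLCol n σp dx) (BLCol n σp dx) ℝ} (hY : ∀ w, Y *ᵥ w ∈ blockSubmodule σp dx Wx) :
    (blCPO σp dx σm dy na V Y).rank ≤ ∑ j, σm j * Module.finrank ℝ (Wy j) := by
  rw [← finrank_blockSubmodule]
  exact Submodule.finrank_mono (range_blCPO_le hV hY)

end Kraus

theorem stmt14_general {n m : ℕ} (σp dx : Fin n → ℕ) (σm dy : Fin m → ℕ)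
    (na : Fin n → Fin m → ℕ)
    (V : ∀ (i : Fin n) (j : Fin m), Fin (na i j) → Matrix (Fin (dy j)) (Fin (dx i)) ℝ)
    (Wx : ∀ i : Fin n, Submodule ℝ (Fin (dx i) → ℝ))
    (Wy : ∀ j : Fin m, Submodule ℝ (Fin (dy j) → ℝ))
    (hcompat : ∀ i j (a : Fin (na i j)), (Wx i).map (V i j a).mulVecLin ≤ Wy j)
    (f : Fin n → ℕ) (u : ∀ i, Fin (f i) → (Fin (dx i) → ℝ))
    (hspan : ∀ i, Submodule.span ℝ (Set.range (u i)) = Wx i)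
    (hortho : ∀ i (l l' : Fin (f i)),
      dotProduct (u i l) (u i l') = if l = l' then (1 : ℝ) else 0)
    (Y : Matrix (BLCol n σp dx) (BLCol n σp dx) ℝ)
    (hY : ∀ p c : BLCol n σp dx,
      Y p c =
        if h : p.1 = c.1 then
          if Fin.cast (congrArg σp h) p.2.1 = c.2.1 then
            ∑ l : Fin (f c.1),
              u p.1 (Fin.cast (congrArg f h).symm l) p.2.2 * u c.1 l c.2.2
          else 0
        else 0) :
    (∑ i, (σp i : ℤ) * Module.finrank ℝ (Wx i)) -
        (∑ j, (σm j : ℤ) * Module.finrank ℝ (Wy j)) ≤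
      (Y.rank : ℤ) - (blCPO σp dx σm dy na V Y).rank := by
  obtain rfl : Y = blockGram σp dx u := Matrix.ext hY
  have hu_mem : ∀ i l, u i l ∈ Wx i := fun i l => hspan i ▸ Submodule.subset_span ⟨l, rfl⟩
  have hrank_Y : ∑ i, σp i * Module.finrank ℝ (Wx i) ≤ (blockGram σp dx u).rank :=
    sum_mul_finrank_le_rank_blockGram hortho fun i => (hspan i).ge
  have hrank_T : (blCPO σp dx σm dy na V (blockGram σp dx u)).rank ≤
      ∑ j, σm j * Module.finrank ℝ (Wy j) :=
    rank_blCPO_le hcompat (blockGram_mulVec_mem hu_mem)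
  zify at hrank_Y hrank_T
  omega

theorem stmt14 {n m : ℕ} (σp dx : Fin n → ℕ) (σm dy : Fin m → ℕ)
    (hσp : ∀ i, 0 < σp i) (hσm : ∀ j, 0 < σm j)
    (hbal : ∑ i, σp i * dx i = ∑ j, σm j * dy j)
    (na : Fin n → Fin m → ℕ)
    (V : ∀ (i : Fin n) (j : Fin m), Fin (na i j) → Matrix (Fin (dy j)) (Fin (dx i)) ℝ)
    (Wx : ∀ i : Fin n, Submodule ℝ (Fin (dx i) → ℝ))
    (Wy : ∀ j : Fin m, Submodule ℝ (Fin (dy j) → ℝ))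
    (hcompat : ∀ i j (a : Fin (na i j)), (Wx i).map (V i j a).mulVecLin ≤ Wy j)
    (f : Fin n → ℕ) (u : ∀ i, Fin (f i) → (Fin (dx i) → ℝ))
    (hspan : ∀ i, Submodule.span ℝ (Set.range (u i)) = Wx i)
    (hortho : ∀ i (l l' : Fin (f i)),
      dotProduct (u i l) (u i l') = if l = l' then (1 : ℝ) else 0)
    (Y : Matrix (BLCol n σp dx) (BLCol n σp dx) ℝ)
    (hY : ∀ p c : BLCol n σp dx,
      Y p c =
        if h : p.1 = c.1 then
          if Fin.cast (congrArg σp h) p.2.1 = c.2.1 then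
            ∑ l : Fin (f c.1),
              u p.1 (Fin.cast (congrArg f h).symm l) p.2.2 * u c.1 l c.2.2
          else 0
        else 0) :
    (∑ i, (σp i : ℤ) * Module.finrank ℝ (Wx i)) -
        (∑ j, (σm j : ℤ) * Module.finrank ℝ (Wy j)) ≤
      (Y.rank : ℤ) - (blCPO σp dx σm dy na V Y).rank :=
  stmt14_general σp dx σm dy na V Wx Wy hcompat f u hspan hortho Y hY
end

section
/- Let Q be a bipartite quiver and (V, σ) a quiver datum as above with Kraus operators A_{V,σ}. Let Y ∈ ℝ^{N×N} be positive semi-definite and block diagonal with blocks Y_r ∈ ℝ^{dim V(x_i)×dim V(x_i)}. Define W(x_i) as the span of the (scaled) eigenvectors of all Y_r with r in the index range of x_i, and W(y_j) = Σ_i Σ_{a: x_i→y_j} V(a)(W(x_i)). Then W is a subrepresentation of V and σ · dim W ≥ rank(Y) − rank(T_{V,σ}(Y)). -/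
/-
Both `Y` and `T_{V,σ}(Y)` are block diagonal up to a relabelling of coordinates:
`Y` has the block `Y_r = Σ_l w_l w_lᵀ` (with `w_l = √λ_l u_l`) in each position `(x_i, r)`, and,
since `V^{i,j,a}_{q,r}` reads only block `(x_i, r)` and writes only block `(y_j, q)`,
`T_{V,σ}(Y)` carries the same block `Z_j = Σ_{i,a,r} V(a) Y_r V(a)ᵀ` in each of the
`σ_-(y_j)` positions `(y_j, q)`. The rank of such a matrix is the sum of the ranks of its blocks.
Now `range Y_r = span {w_l} ≤ W(x_i)`, while `Z_j = Σ (V(a) w_l)(V(a) w_l)ᵀ` has range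
`span {V(a) w_l} = W(y_j)`; so `rank Y ≤ Σ_i σ_+(x_i) dim W(x_i)` and
`rank T_{V,σ}(Y) = Σ_j σ_-(y_j) dim W(y_j)`.
-/

open Matrix BigOperators
open scoped Classical

theorem Submodule.finrank_iSup_le_sum {K V κ : Type*} [DivisionRing K] [AddCommGroup V]
    [Module K V] [FiniteDimensional K V] [Fintype κ] (p : κ → Submodule K V) :
    Module.finrank K ↥(⨆ k, p k) ≤ ∑ k, Module.finrank K ↥(p k) := by
  rw [← Finset.sup_univ_eq_iSup]
  induction (Finset.univ : Finset κ) using Finset.induction_on with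
  | empty => simp
  | insert k s hks ih =>
    rw [Finset.sup_insert, Finset.sum_insert hks]
    exact (finrank_add_le_finrank_add_finrank _ _).trans (Nat.add_le_add_left ih _)

theorem Fin.sum_sigma_fst {N : ℕ} {σ : Fin N → ℕ} (f : Fin N → ℕ) :
    ∑ k : Σ i, Fin (σ i), f k.1 = ∑ i, σ i * f i := by
  simp [Fintype.sum_sigma]

namespace Matrix

theorem range_mulVecLin_sum_vecMulVec_self {R ι κ : Type*} [Field R] [LinearOrder R]
    [IsStrictOrderedRing R] [Fintype ι] [Fintype κ] (w : κ → ι → R) :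
    LinearMap.range (∑ k, vecMulVec (w k) (w k)).mulVecLin = Submodule.span R (Set.range w) := by
  set G : Matrix ι κ R := of fun i k => w k i
  have hG : ∑ k, vecMulVec (w k) (w k) = G * Gᵀ := by
    ext i j
    simp [G, mul_apply, vecMulVec_apply, Matrix.sum_apply]
  have hle : LinearMap.range (G * Gᵀ).mulVecLin ≤ LinearMap.range G.mulVecLin := by
    rw [mulVecLin_mul]
    exact LinearMap.range_comp_le_range _ _
  rw [hG, Submodule.eq_of_le_of_finrank_eq hle (rank_self_mul_transpose G), range_mulVecLin]
  rfl

theorem mul_vecMulVec_mul_transpose {R l m n o : Type*} [CommSemiring R] [Fintype m]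
    [Fintype o] (A : Matrix l m R) (v : m → R) (w : o → R) (B : Matrix n o R) :
    A * vecMulVec v w * Bᵀ = vecMulVec (A *ᵥ v) (B *ᵥ w) := by
  rw [mul_vecMulVec, vecMulVec_mul, vecMul_transpose]

theorem vecMulVec_sqrt_smul_self {ι : Type*} {c : ℝ} (hc : 0 ≤ c) (u : ι → ℝ) :
    vecMulVec (√c • u) (√c • u) = c • vecMulVec u u := by
  rw [smul_vecMulVec, vecMulVec_smul, smul_smul, Real.mul_self_sqrt hc]

section OrthonormalBlocks

variable {K ι κ : Type*} [Field K] [Fintype ι] [Fintype κ] {β : κ → Type*}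
  [∀ k, Fintype (β k)] [∀ k, DecidableEq (β k)] {E : ∀ k, Matrix ι (β k) K}

theorem sum_mul_mul_transpose_mul_of_orthonormal (hE₁ : ∀ k, (E k)ᵀ * E k = 1)
    (hE₀ : ∀ k k', k ≠ k' → (E k)ᵀ * E k' = 0) (Z : ∀ k, Matrix (β k) (β k) K) (k : κ) :
    (∑ k', E k' * Z k' * (E k')ᵀ) * E k = E k * Z k := by
  rw [Matrix.sum_mul, Fintype.sum_eq_single k fun k' hk' => by
    rw [Matrix.mul_assoc, hE₀ k' k hk', Matrix.mul_zero]]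
  rw [Matrix.mul_assoc, hE₁, Matrix.mul_one]

theorem transpose_mul_sum_mul_mul_transpose_mul_of_orthonormal
    (hE₁ : ∀ k, (E k)ᵀ * E k = 1) (hE₀ : ∀ k k', k ≠ k' → (E k)ᵀ * E k' = 0)
    (Z : ∀ k, Matrix (β k) (β k) K) (k : κ) :
    (E k)ᵀ * (∑ k', E k' * Z k' * (E k')ᵀ) * E k = Z k := by
  rw [Matrix.mul_assoc, sum_mul_mul_transpose_mul_of_orthonormal hE₁ hE₀, ← Matrix.mul_assoc,
    hE₁, Matrix.one_mul]

theorem range_sum_mul_mul_transpose_of_orthonormal (hE₁ : ∀ k, (E k)ᵀ * E k = 1)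
    (hE₀ : ∀ k k', k ≠ k' → (E k)ᵀ * E k' = 0) (Z : ∀ k, Matrix (β k) (β k) K) :
    LinearMap.range (∑ k, E k * Z k * (E k)ᵀ).mulVecLin =
      ⨆ k, (LinearMap.range (Z k).mulVecLin).map (E k).mulVecLin := by
  apply le_antisymm
  · rintro _ ⟨x, rfl⟩
    simp only [mulVecLin_apply, sum_mulVec, ← mulVec_mulVec]
    exact Submodule.sum_mem _ fun k _ =>
      Submodule.mem_iSup_of_mem k ⟨_, ⟨(E k)ᵀ *ᵥ x, rfl⟩, rfl⟩
  · refine iSup_le fun k => ?_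
    rintro _ ⟨_, ⟨x, rfl⟩, rfl⟩
    refine ⟨E k *ᵥ x, ?_⟩
    simp only [mulVecLin_apply, mulVec_mulVec, sum_mul_mul_transpose_mul_of_orthonormal hE₁ hE₀]

theorem finrank_iSup_map_of_orthonormal (hE₁ : ∀ k, (E k)ᵀ * E k = 1)
    (hE₀ : ∀ k k', k ≠ k' → (E k)ᵀ * E k' = 0) (p : ∀ k, Submodule K (β k → K)) :
    Module.finrank K ↥(⨆ k, (p k).map (E k).mulVecLin) = ∑ k, Module.finrank K ↥(p k) := by
  refine le_antisymm ((Submodule.finrank_iSup_le_sum _).trans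
    (Finset.sum_le_sum fun k _ => Submodule.finrank_map_le _ _)) ?_
  let Ψ : (∀ k, p k) →ₗ[K] ι → K :=
    ∑ k, (E k).mulVecLin ∘ₗ (p k).subtype ∘ₗ LinearMap.proj k
  have hΨ : Function.Injective Ψ := by
    refine (injective_iff_map_eq_zero Ψ).2 fun x hx => funext fun k => Subtype.ext ?_
    have hcomp : ∑ k', ((E k)ᵀ * E k') *ᵥ (x k' : β k' → K) = x k := by
      rw [Fintype.sum_eq_single k fun k' hk' => by rw [hE₀ k k' hk'.symm, zero_mulVec], hE₁,
        one_mulVec]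
    simpa [Ψ, mulVec_sum, mulVec_mulVec, hcomp] using congrArg ((E k)ᵀ *ᵥ ·) hx
  have hrange : LinearMap.range Ψ ≤ ⨆ k, (p k).map (E k).mulVecLin := by
    rintro _ ⟨x, rfl⟩
    simp only [Ψ, LinearMap.sum_apply]
    exact Submodule.sum_mem _ fun k _ => Submodule.mem_iSup_of_mem k ⟨x k, (x k).2, rfl⟩
  calc ∑ k, Module.finrank K ↥(p k) = Module.finrank K (∀ k, p k) :=
        (Module.finrank_pi_fintype K).symm
    _ = Module.finrank K ↥(LinearMap.range Ψ) := (LinearMap.finrank_range_of_inj hΨ).symm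
    _ ≤ _ := Submodule.finrank_mono hrange

theorem rank_sum_mul_mul_transpose_of_orthonormal (hE₁ : ∀ k, (E k)ᵀ * E k = 1)
    (hE₀ : ∀ k k', k ≠ k' → (E k)ᵀ * E k' = 0) (Z : ∀ k, Matrix (β k) (β k) K) :
    (∑ k, E k * Z k * (E k)ᵀ).rank = ∑ k, (Z k).rank := by
  rw [Matrix.rank, range_sum_mul_mul_transpose_of_orthonormal hE₁ hE₀,
    finrank_iSup_map_of_orthonormal hE₁ hE₀]
  rfl

end OrthonormalBlocks

end Matrix

section BlockStructure

variable {N : ℕ} (σ d : Fin N → ℕ)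

def blBlockIncl (k : Σ i, Fin (σ i)) : Matrix (BLCol N σ d) (Fin (d k.1)) ℝ :=
  (1 : Matrix (BLCol N σ d) (BLCol N σ d) ℝ).submatrix id fun t => ⟨k.1, (k.2, t)⟩

def blBlockDiag (B : ∀ i, Fin (σ i) → Matrix (Fin (d i)) (Fin (d i)) ℝ) :
    Matrix (BLCol N σ d) (BLCol N σ d) ℝ :=
  fun p c =>
    if h : p.1 = c.1 then
      if Fin.cast (congrArg σ h) p.2.1 = c.2.1 then
        B c.1 c.2.1 (Fin.cast (congrArg d h) p.2.2) c.2.2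
      else 0
    else 0

variable {σ d}

theorem blBlockIncl_transpose_mul_blBlockIncl (k k' : Σ i, Fin (σ i)) :
    (blBlockIncl σ d k)ᵀ * blBlockIncl σ d k' =
      (1 : Matrix (BLCol N σ d) (BLCol N σ d) ℝ).submatrix (fun t => ⟨k.1, (k.2, t)⟩)
        (fun t => ⟨k'.1, (k'.2, t)⟩) := by
  rw [blBlockIncl, blBlockIncl, transpose_submatrix, transpose_one,
    ← submatrix_mul _ _ _ id _ Function.bijective_id, Matrix.one_mul]

theorem blBlockIncl_transpose_mul_self (k : Σ i, Fin (σ i)) :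
    (blBlockIncl σ d k)ᵀ * blBlockIncl σ d k = 1 := by
  rw [blBlockIncl_transpose_mul_blBlockIncl]
  exact submatrix_one _ fun t t' h => by simpa using h

theorem blBlockIncl_transpose_mul_of_ne {k k' : Σ i, Fin (σ i)} (h : k ≠ k') :
    (blBlockIncl σ d k)ᵀ * blBlockIncl σ d k' = 0 := by
  rw [blBlockIncl_transpose_mul_blBlockIncl]
  ext t t'
  rcases k with ⟨i, r⟩
  rcases k' with ⟨i', r'⟩
  simp only [submatrix_apply, one_apply, Matrix.zero_apply, ite_eq_right_iff]
  intro he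
  simp only [Sigma.mk.inj_iff] at he
  obtain ⟨rfl, he⟩ := he
  simp_all

variable {M : ℕ} {σ' d' : Fin M → ℕ}

theorem blBlockIncl_mul_mul_transpose_apply {k : Σ i, Fin (σ i)} {k' : Σ i, Fin (σ' i)}
    (Z : Matrix (Fin (d k.1)) (Fin (d' k'.1)) ℝ) (s : Fin (d k.1)) (t : Fin (d' k'.1)) :
    (blBlockIncl σ d k * Z * (blBlockIncl σ' d' k')ᵀ) ⟨k.1, (k.2, s)⟩ ⟨k'.1, (k'.2, t)⟩ =
      Z s t := by
  simp [blBlockIncl, mul_apply, one_apply]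

theorem blBlockIncl_mul_mul_transpose_apply_of_ne_left {k : Σ i, Fin (σ i)}
    {k' : Σ i, Fin (σ' i)} (Z : Matrix (Fin (d k.1)) (Fin (d' k'.1)) ℝ) {i : Fin N}
    {r : Fin (σ i)} (h : ⟨i, r⟩ ≠ k) (s : Fin (d i)) (c : BLCol M σ' d') :
    (blBlockIncl σ d k * Z * (blBlockIncl σ' d' k')ᵀ) ⟨i, (r, s)⟩ c = 0 := by
  have hne : ∀ x, (⟨i, (r, s)⟩ : BLCol N σ d) ≠ ⟨k.1, (k.2, x)⟩ := by
    rintro x he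
    cases he
    exact h rfl
  simp [blBlockIncl, mul_apply, one_apply, hne]

theorem blBlockIncl_mul_mul_transpose_apply_of_ne_right {k : Σ i, Fin (σ i)}
    {k' : Σ i, Fin (σ' i)} (Z : Matrix (Fin (d k.1)) (Fin (d' k'.1)) ℝ) {i : Fin M}
    {r : Fin (σ' i)} (h : ⟨i, r⟩ ≠ k') (t : Fin (d' i)) (p : BLCol N σ d) :
    (blBlockIncl σ d k * Z * (blBlockIncl σ' d' k')ᵀ) p ⟨i, (r, t)⟩ = 0 := by
  have hne : ∀ x, (⟨k'.1, (k'.2, x)⟩ : BLCol M σ' d') ≠ ⟨i, (r, t)⟩ := by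
    rintro x he
    cases he
    exact h rfl
  simp [blBlockIncl, mul_apply, one_apply, hne]

theorem blBlockDiag_eq_sum (B : ∀ i, Fin (σ i) → Matrix (Fin (d i)) (Fin (d i)) ℝ) :
    blBlockDiag σ d B = ∑ k, blBlockIncl σ d k * B k.1 k.2 * (blBlockIncl σ d k)ᵀ := by
  ext ⟨i, r, s⟩ ⟨i', r', t⟩
  rw [Matrix.sum_apply, Fintype.sum_eq_single ⟨i, r⟩ fun k hk =>
    blBlockIncl_mul_mul_transpose_apply_of_ne_left _ (Ne.symm hk) _ _]
  by_cases hi : i = i'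
  · subst hi
    by_cases hr : r = r'
    · subst hr
      rw [blBlockIncl_mul_mul_transpose_apply (k := ⟨i, r⟩) (k' := ⟨i, r⟩)]
      simp [blBlockDiag]
    · rw [blBlockIncl_mul_mul_transpose_apply_of_ne_right _ (by simpa using Ne.symm hr)]
      simp [blBlockDiag, hr]
  · rw [blBlockIncl_mul_mul_transpose_apply_of_ne_right _ (by simp [Ne.symm hi])]
    simp [blBlockDiag, hi]

theorem rank_blBlockDiag (B : ∀ i, Fin (σ i) → Matrix (Fin (d i)) (Fin (d i)) ℝ) :
    (blBlockDiag σ d B).rank = ∑ i, ∑ r, (B i r).rank := by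
  rw [blBlockDiag_eq_sum, rank_sum_mul_mul_transpose_of_orthonormal
    blBlockIncl_transpose_mul_self (fun _ _ => blBlockIncl_transpose_mul_of_ne), Fintype.sum_sigma]

theorem rank_blBlockDiag_le {B : ∀ i, Fin (σ i) → Matrix (Fin (d i)) (Fin (d i)) ℝ}
    {W : ∀ i, Submodule ℝ (Fin (d i) → ℝ)} (hBW : ∀ i r, LinearMap.range (B i r).mulVecLin ≤ W i) :
    (blBlockDiag σ d B).rank ≤ ∑ i, σ i * Module.finrank ℝ (W i) := by
  rw [rank_blBlockDiag]
  exact Finset.sum_le_sum fun i _ => (Finset.sum_le_sum fun r _ =>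
    Submodule.finrank_mono (hBW i r)).trans_eq (by simp)

section Kraus

variable {n m : ℕ} {σp dx : Fin n → ℕ} {σm dy : Fin m → ℕ} {na : Fin n → Fin m → ℕ}
  (V : ∀ (i : Fin n) (j : Fin m), Fin (na i j) → Matrix (Fin (dy j)) (Fin (dx i)) ℝ)

theorem blKraus_apply_of_ne {i : Fin n} {j : Fin m} (a : Fin (na i j)) {q : Fin (σm j)}
    {r : Fin (σp i)} {j₀ : Fin m} {q₀ : Fin (σm j₀)} {i₀ : Fin n} {r₀ : Fin (σp i₀)}
    (h : ¬((⟨j₀, q₀⟩ : Σ j, Fin (σm j)) = ⟨j, q⟩ ∧ (⟨i₀, r₀⟩ : Σ i, Fin (σp i)) = ⟨i, r⟩))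
    (s : Fin (dy j₀)) (t : Fin (dx i₀)) :
    blKraus σp dx σm dy na V i j a q r ⟨j₀, (q₀, s)⟩ ⟨i₀, (r₀, t)⟩ = 0 := by
  simp only [blKraus]
  split_ifs with hidx hblk
  · obtain ⟨rfl, rfl⟩ := hidx
    simp only [Fin.cast_eq_self] at hblk
    exact absurd ⟨by rw [hblk.1], by rw [hblk.2]⟩ h
  all_goals rfl

theorem blKraus_eq (i : Fin n) (j : Fin m) (a : Fin (na i j)) (q : Fin (σm j))
    (r : Fin (σp i)) :
    blKraus σp dx σm dy na V i j a q r =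
      blBlockIncl σm dy ⟨j, q⟩ * V i j a * (blBlockIncl σp dx ⟨i, r⟩)ᵀ := by
  ext ⟨j₀, q₀, s⟩ ⟨i₀, r₀, t⟩
  by_cases hrow : (⟨j₀, q₀⟩ : Σ j, Fin (σm j)) = ⟨j, q⟩
  · by_cases hcol : (⟨i₀, r₀⟩ : Σ i, Fin (σp i)) = ⟨i, r⟩
    · cases hrow
      cases hcol
      rw [blBlockIncl_mul_mul_transpose_apply (k := ⟨j, q⟩) (k' := ⟨i, r⟩)]
      simp [blKraus]
    · rw [blKraus_apply_of_ne V a (fun h => hcol h.2)]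
      exact (blBlockIncl_mul_mul_transpose_apply_of_ne_right (k := ⟨j, q⟩) _ hcol t _).symm
  · rw [blKraus_apply_of_ne V a (fun h => hrow h.1)]
    exact (blBlockIncl_mul_mul_transpose_apply_of_ne_left (k' := ⟨i, r⟩) _ hrow s _).symm

theorem blKraus_mul_blBlockDiag_mul_transpose
    (B : ∀ i, Fin (σp i) → Matrix (Fin (dx i)) (Fin (dx i)) ℝ)
    (i : Fin n) (j : Fin m) (a : Fin (na i j)) (q : Fin (σm j)) (r : Fin (σp i)) :
    blKraus σp dx σm dy na V i j a q r * blBlockDiag σp dx B *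
        (blKraus σp dx σm dy na V i j a q r)ᵀ =
      blBlockIncl σm dy ⟨j, q⟩ * (V i j a * B i r * (V i j a)ᵀ) *
        (blBlockIncl σm dy ⟨j, q⟩)ᵀ := by
  have hB := transpose_mul_sum_mul_mul_transpose_mul_of_orthonormal
    blBlockIncl_transpose_mul_self (fun _ _ => blBlockIncl_transpose_mul_of_ne)
    (fun k : Σ i, Fin (σp i) => B k.1 k.2) ⟨i, r⟩
  rw [blKraus_eq, blBlockDiag_eq_sum, ← hB]
  simp only [transpose_mul, transpose_transpose, Matrix.mul_assoc]

theorem blCPO_blBlockDiag (B : ∀ i, Fin (σp i) → Matrix (Fin (dx i)) (Fin (dx i)) ℝ) :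
    blCPO σp dx σm dy na V (blBlockDiag σp dx B) =
      ∑ k : Σ j, Fin (σm j), blBlockIncl σm dy k *
        (∑ i, ∑ a : Fin (na i k.1), ∑ r, V i k.1 a * B i r * (V i k.1 a)ᵀ) *
          (blBlockIncl σm dy k)ᵀ := by
  simp only [blCPO, blKraus_mul_blBlockDiag_mul_transpose, Fintype.sum_sigma, Matrix.mul_sum,
    Matrix.sum_mul]
  -- reorder `∑ i j a q r` as `∑ j q i a r`
  rw [Finset.sum_comm]
  refine Finset.sum_congr rfl fun j _ => ?_
  rw [Finset.sum_comm]
  exact Finset.sum_congr rfl fun i _ => Finset.sum_comm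

theorem rank_blCPO_blBlockDiag (B : ∀ i, Fin (σp i) → Matrix (Fin (dx i)) (Fin (dx i)) ℝ) :
    (blCPO σp dx σm dy na V (blBlockDiag σp dx B)).rank =
      ∑ j, σm j * (∑ i, ∑ a : Fin (na i j), ∑ r, V i j a * B i r * (V i j a)ᵀ).rank := by
  rw [blCPO_blBlockDiag, rank_sum_mul_mul_transpose_of_orthonormal blBlockIncl_transpose_mul_self
    (fun _ _ => blBlockIncl_transpose_mul_of_ne)]
  exact Fin.sum_sigma_fst (fun j => (∑ i, ∑ a : Fin (na i j), ∑ r,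
    V i j a * B i r * (V i j a)ᵀ).rank)

theorem range_sum_mul_mul_transpose_of_eq_sum_vecMulVec {dd : ∀ i, Fin (σp i) → ℕ}
    {B : ∀ i, Fin (σp i) → Matrix (Fin (dx i)) (Fin (dx i)) ℝ}
    {w : ∀ i (r : Fin (σp i)), Fin (dd i r) → Fin (dx i) → ℝ}
    (hB : ∀ i r, B i r = ∑ l, vecMulVec (w i r l) (w i r l)) (j : Fin m) :
    LinearMap.range (∑ i, ∑ a : Fin (na i j), ∑ r, V i j a * B i r * (V i j a)ᵀ).mulVecLin =
      ⨆ i, ⨆ a : Fin (na i j),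
        (Submodule.span ℝ {x | ∃ r l, x = w i r l}).map (V i j a).mulVecLin := by
  have hsum : ∑ i, ∑ a : Fin (na i j), ∑ r, V i j a * B i r * (V i j a)ᵀ =
      ∑ x : Σ i, Σ a : Fin (na i j), Σ r, Fin (dd i r),
        vecMulVec (V x.1 j x.2.1 *ᵥ w x.1 x.2.2.1 x.2.2.2)
          (V x.1 j x.2.1 *ᵥ w x.1 x.2.2.1 x.2.2.2) := by
    simp only [Fintype.sum_sigma, hB, Matrix.mul_sum, Matrix.sum_mul, mul_vecMulVec_mul_transpose]
  rw [hsum, range_mulVecLin_sum_vecMulVec_self]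
  simp only [Submodule.map_span, ← Submodule.span_iUnion]
  congr 1
  ext y
  simp [Sigma.exists]

end Kraus

end BlockStructure

theorem stmt15_general {n m : ℕ} (σp dx : Fin n → ℕ) (σm dy : Fin m → ℕ)
    (na : Fin n → Fin m → ℕ)
    (V : ∀ (i : Fin n) (j : Fin m), Fin (na i j) → Matrix (Fin (dy j)) (Fin (dx i)) ℝ)
    (Y : Matrix (BLCol n σp dx) (BLCol n σp dx) ℝ)
    (Yblk : ∀ i : Fin n, Fin (σp i) → Matrix (Fin (dx i)) (Fin (dx i)) ℝ)
    (hY : ∀ p c : BLCol n σp dx,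
      Y p c =
        if h : p.1 = c.1 then
          if Fin.cast (congrArg σp h) p.2.1 = c.2.1 then
            Yblk c.1 c.2.1 (Fin.cast (congrArg dx h) p.2.2) c.2.2
          else 0
        else 0)
    (dd : ∀ i : Fin n, Fin (σp i) → ℕ)
    (lam : ∀ i (r : Fin (σp i)), Fin (dd i r) → ℝ)
    (uu : ∀ i (r : Fin (σp i)), Fin (dd i r) → (Fin (dx i) → ℝ))
    (hlam : ∀ i r l, 0 < lam i r l)
    (hdec : ∀ i r, Yblk i r = ∑ l, lam i r l • vecMulVec (uu i r l) (uu i r l))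
    (Wx : ∀ i : Fin n, Submodule ℝ (Fin (dx i) → ℝ))
    (hWx : ∀ i, Wx i =
      Submodule.span ℝ {x | ∃ (r : Fin (σp i)) (l : Fin (dd i r)),
        x = Real.sqrt (lam i r l) • uu i r l})
    (Wy : ∀ j : Fin m, Submodule ℝ (Fin (dy j) → ℝ))
    (hWy : ∀ j, Wy j = ⨆ i : Fin n, ⨆ a : Fin (na i j), (Wx i).map (V i j a).mulVecLin) :
    (∀ i j (a : Fin (na i j)), (Wx i).map (V i j a).mulVecLin ≤ Wy j) ∧
      (Y.rank : ℤ) - (blCPO σp dx σm dy na V Y).rank ≤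
        (∑ i, (σp i : ℤ) * Module.finrank ℝ (Wx i)) -
          (∑ j, (σm j : ℤ) * Module.finrank ℝ (Wy j)) := by
  obtain rfl : Y = blBlockDiag σp dx Yblk := Matrix.ext hY
  have hgram : ∀ i r,
      Yblk i r = ∑ l, vecMulVec (√(lam i r l) • uu i r l) (√(lam i r l) • uu i r l) :=
    fun i r => by simp only [hdec, vecMulVec_sqrt_smul_self (hlam i r _).le]
  have hYWx : ∀ i r, LinearMap.range (Yblk i r).mulVecLin ≤ Wx i := fun i r => by
    rw [hgram, range_mulVecLin_sum_vecMulVec_self, hWx]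
    exact Submodule.span_mono (Set.range_subset_iff.2 fun l => ⟨r, l, rfl⟩)
  have hWy_range : ∀ j, Wy j = LinearMap.range (∑ i, ∑ a : Fin (na i j), ∑ r,
      V i j a * Yblk i r * (V i j a)ᵀ).mulVecLin := fun j => by
    rw [range_sum_mul_mul_transpose_of_eq_sum_vecMulVec V hgram, hWy j]
    simp_rw [hWx]
  have hrankY := rank_blBlockDiag_le hYWx
  have hrankT : (blCPO σp dx σm dy na V (blBlockDiag σp dx Yblk)).rank =
      ∑ j, σm j * Module.finrank ℝ (Wy j) := by
    rw [rank_blCPO_blBlockDiag]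
    exact Finset.sum_congr rfl fun j _ => by rw [hWy_range j, Matrix.rank]
  refine ⟨fun i j a => hWy j ▸ le_iSup₂_of_le i a le_rfl, ?_⟩
  zify at hrankY hrankT
  linarith

theorem stmt15 {n m : ℕ} (σp dx : Fin n → ℕ) (σm dy : Fin m → ℕ)
    (hσp : ∀ i, 0 < σp i) (hσm : ∀ j, 0 < σm j)
    (hbal : ∑ i, σp i * dx i = ∑ j, σm j * dy j)
    (na : Fin n → Fin m → ℕ)
    (V : ∀ (i : Fin n) (j : Fin m), Fin (na i j) → Matrix (Fin (dy j)) (Fin (dx i)) ℝ)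
    (Y : Matrix (BLCol n σp dx) (BLCol n σp dx) ℝ) (hpsd : Y.PosSemidef)
    (Yblk : ∀ i : Fin n, Fin (σp i) → Matrix (Fin (dx i)) (Fin (dx i)) ℝ)
    (hY : ∀ p c : BLCol n σp dx,
      Y p c =
        if h : p.1 = c.1 then
          if Fin.cast (congrArg σp h) p.2.1 = c.2.1 then
            Yblk c.1 c.2.1 (Fin.cast (congrArg dx h) p.2.2) c.2.2
          else 0
        else 0)
    (dd : ∀ i : Fin n, Fin (σp i) → ℕ)
    (lam : ∀ i (r : Fin (σp i)), Fin (dd i r) → ℝ)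
    (uu : ∀ i (r : Fin (σp i)), Fin (dd i r) → (Fin (dx i) → ℝ))
    (hlam : ∀ i r l, 0 < lam i r l)
    (hortho : ∀ i r (l l' : Fin (dd i r)),
      dotProduct (uu i r l) (uu i r l') = if l = l' then (1 : ℝ) else 0)
    (hdec : ∀ i r, Yblk i r = ∑ l, lam i r l • vecMulVec (uu i r l) (uu i r l))
    (Wx : ∀ i : Fin n, Submodule ℝ (Fin (dx i) → ℝ))
    (hWx : ∀ i, Wx i =
      Submodule.span ℝ {x | ∃ (r : Fin (σp i)) (l : Fin (dd i r)),
        x = Real.sqrt (lam i r l) • uu i r l})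
    (Wy : ∀ j : Fin m, Submodule ℝ (Fin (dy j) → ℝ))
    (hWy : ∀ j, Wy j = ⨆ i : Fin n, ⨆ a : Fin (na i j), (Wx i).map (V i j a).mulVecLin) :
    (∀ i j (a : Fin (na i j)), (Wx i).map (V i j a).mulVecLin ≤ Wy j) ∧
      (Y.rank : ℤ) - (blCPO σp dx σm dy na V Y).rank ≤
        (∑ i, (σp i : ℤ) * Module.finrank ℝ (Wx i)) -
          (∑ j, (σm j : ℤ) * Module.finrank ℝ (Wy j)) :=
  stmt15_general σp dx σm dy na V Y Yblk hY dd lam uu hlam hdec Wx hWx Wy hWy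
end

section
/- Let Q be a bipartite quiver and (V, σ) a quiver datum with σ · dim V = 0, σ positive on sources and negative on sinks, with Kraus operators A_{V,σ}. Then disc(V, σ) = disc(A_{V,σ}), i.e. the maximum of σ · dim W over subrepresentations W ≤ V equals the maximum c such that there exists a c-shrunk subspace for A_{V,σ}. -/
open Matrix BigOperators
open scoped Classical

/-!
Split `ℝ^{Σ_i σp(i)·dx(i)}` into `σp(i)` blocks `ℝ^{dx(i)}` for each source `i` (and likewise on
the sink side). The Kraus operator `V^{i,j,a}_{q,r}` reads block `(i,r)`, applies `V(a)` and writes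
the result into block `(j,q)`. Consequently, for every subspace `U`, the sum `Σ A(U)` of the images
is exactly the full block product of the spaces `W_j = Σ_{i,a} V(a)(W_i)`, where `W_i` is spanned by
the `(i,r)`-components of vectors of `U`, and `U` lies in the block product of the `W_i`. So
`(W_x, W_y) ↦ ∏ W_x` and `U ↦ (W_i, W_j)` turn a subrepresentation into a shrunk subspace and back,
and dimensions of block products are the `σ`-weighted sums of the dimensions of the blocks.
-/
section Block

variable {R ι : Type*} [Semiring R] {B D : ι → Type*}

def blockProj (j : ι) (q : B j) : ((Σ j, B j × D j) → R) →ₗ[R] (D j → R) :=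
  LinearMap.funLeft R R fun s => ⟨j, (q, s)⟩

@[simp] lemma blockProj_apply (j : ι) (q : B j) (g : (Σ j, B j × D j) → R) (s : D j) :
    blockProj j q g s = g ⟨j, (q, s)⟩ := rfl

def blockPi (W : ∀ j, Submodule R (D j → R)) : Submodule R ((Σ j, B j × D j) → R) :=
  ⨅ j, ⨅ q : B j, (W j).comap (blockProj j q)

def blockSpan (U : Submodule R ((Σ j, B j × D j) → R)) (j : ι) : Submodule R (D j → R) :=
  ⨆ q : B j, U.map (blockProj j q)

lemma mem_blockPi {W : ∀ j, Submodule R (D j → R)} {g : (Σ j, B j × D j) → R} :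
    g ∈ blockPi W ↔ ∀ j q, blockProj j q g ∈ W j := by
  simp only [blockPi, Submodule.mem_iInf, Submodule.mem_comap]

lemma gc_blockSpan_blockPi :
    GaloisConnection (blockSpan (R := R) (B := B) (D := D)) blockPi := fun U W => by
  simp only [blockSpan, blockPi, Pi.le_def, iSup_le_iff, le_iInf_iff,
    Submodule.map_le_iff_le_comap]

lemma le_blockPi_blockSpan (U : Submodule R ((Σ j, B j × D j) → R)) : U ≤ blockPi (blockSpan U) :=
  gc_blockSpan_blockPi.le_u_l U

lemma blockSpan_blockPi_le (W : ∀ j, Submodule R (D j → R)) : blockSpan (blockPi (B := B) W) ≤ W :=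
  gc_blockSpan_blockPi.l_u_le W

lemma blockPi_mono {W W' : ∀ j, Submodule R (D j → R)} (h : W ≤ W') :
    blockPi (B := B) W ≤ blockPi W' :=
  gc_blockSpan_blockPi.monotone_u h

lemma finrank_blockPi {K : Type*} [DivisionRing K] [Fintype ι] [∀ j, Fintype (B j)]
    [∀ j, Fintype (D j)] (W : ∀ j, Submodule K (D j → K)) :
    Module.finrank K (blockPi (B := B) W) = ∑ j, Fintype.card (B j) * Module.finrank K (W j) := by
  let e : blockPi (B := B) W ≃ₗ[K] ∀ j, B j → W j :=
    { toFun g j q := ⟨blockProj j q g.1, mem_blockPi.1 g.2 j q⟩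
      invFun F := ⟨fun p => (F p.1 p.2.1 : D p.1 → K) p.2.2, mem_blockPi.2 fun j q => (F j q).2⟩
      map_add' _ _ := rfl
      map_smul' _ _ := rfl
      left_inv _ := rfl
      right_inv _ := rfl }
  simp [e.finrank_eq, Module.finrank_pi_fintype]

variable [DecidableEq ι] [∀ j, DecidableEq (B j)]

def blockEmb (j : ι) (q : B j) : (D j → R) →ₗ[R] ((Σ j, B j × D j) → R) where
  toFun v p := Pi.single (M := fun j => B j → D j → R) j (Pi.single q v) p.1 p.2.1 p.2.2
  map_add' u v := by
    funext p
    simp only [Pi.single_add, Pi.add_apply]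
  map_smul' c v := by
    funext p
    simp only [Pi.single_smul, Pi.smul_apply, RingHom.id_apply]

@[simp] lemma blockEmb_apply_same (j : ι) (q : B j) (v : D j → R) (s : D j) :
    blockEmb j q v ⟨j, (q, s)⟩ = v s := by
  simp [blockEmb]

lemma blockEmb_apply_of_ne_fst {j j' : ι} (h : j' ≠ j) (q : B j) (v : D j → R) (q' : B j')
    (s : D j') : blockEmb j q v ⟨j', (q', s)⟩ = 0 := by
  simp [blockEmb, h]

lemma blockEmb_apply_of_ne_snd {j : ι} {q q' : B j} (h : q' ≠ q) (v : D j → R) (s : D j) :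
    blockEmb j q v ⟨j, (q', s)⟩ = 0 := by
  simp [blockEmb, h]

lemma map_blockEmb_le_blockPi (W : ∀ j, Submodule R (D j → R)) (j : ι) (q : B j) :
    (W j).map (blockEmb j q) ≤ blockPi W := by
  rintro _ ⟨v, hv, rfl⟩
  refine mem_blockPi.2 fun j' q' => ?_
  rcases eq_or_ne j' j with rfl | hj
  · rcases eq_or_ne q' q with rfl | hq
    · rwa [show blockProj j' q' (blockEmb j' q' v) = v by ext; simp]
    · rw [show blockProj j' q' (blockEmb j' q v) = 0 by ext; simp [blockEmb_apply_of_ne_snd hq]]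
      exact zero_mem _
  · rw [show blockProj j' q' (blockEmb j q v) = 0 by ext; simp [blockEmb_apply_of_ne_fst hj]]
    exact zero_mem _

variable [Fintype ι] [∀ j, Fintype (B j)]

lemma sum_blockEmb_blockProj (g : (Σ j, B j × D j) → R) :
    ∑ j, ∑ q, blockEmb j q (blockProj j q g) = g := by
  funext ⟨j, q, s⟩
  simp only [Finset.sum_apply]
  rw [Finset.sum_eq_single j (fun j' _ hj => Finset.sum_eq_zero fun q' _ =>
      blockEmb_apply_of_ne_fst (Ne.symm hj) _ _ _ _) (by simp),
    Finset.sum_eq_single q (fun q' _ hq => blockEmb_apply_of_ne_snd (Ne.symm hq) _ _)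
      (by simp)]
  simp

lemma blockPi_eq_iSup_map_blockEmb (W : ∀ j, Submodule R (D j → R)) :
    blockPi W = ⨆ j, ⨆ q : B j, (W j).map (blockEmb j q) := by
  refine le_antisymm (fun g hg => ?_) (iSup₂_le (map_blockEmb_le_blockPi W))
  rw [← sum_blockEmb_blockProj g]
  exact Submodule.sum_mem _ fun j _ => Submodule.sum_mem _ fun q _ =>
    Submodule.mem_iSup_of_mem j <| Submodule.mem_iSup_of_mem q <|
      Submodule.mem_map_of_mem (mem_blockPi.1 hg j q)

lemma blockEmb_dotProduct [∀ j, Fintype (D j)] (j : ι) (q : B j) (w : D j → R)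
    (g : (Σ j, B j × D j) → R) : blockEmb j q w ⬝ᵥ g = w ⬝ᵥ blockProj j q g := by
  simp only [dotProduct, Fintype.sum_sigma, Fintype.sum_prod_type]
  rw [Finset.sum_eq_single j (fun j' _ hj => by simp [blockEmb_apply_of_ne_fst hj]) (by simp),
    Finset.sum_eq_single q (fun q' _ hq => by simp [blockEmb_apply_of_ne_snd hq]) (by simp)]
  simp

end Block

section Kraus

variable {n m : ℕ} (σp dx : Fin n → ℕ) (σm dy : Fin m → ℕ) (na : Fin n → Fin m → ℕ)
  (V : ∀ (i : Fin n) (j : Fin m), Fin (na i j) → Matrix (Fin (dy j)) (Fin (dx i)) ℝ)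

lemma blKraus_row_of_ne {i : Fin n} {j j' : Fin m} (h : j' ≠ j) (a : Fin (na i j))
    (q : Fin (σm j)) (r : Fin (σp i)) (q' : Fin (σm j')) (s : Fin (dy j')) :
    blKraus σp dx σm dy na V i j a q r ⟨j', (q', s)⟩ = 0 := by
  funext c
  simp [blKraus, h]

lemma blKraus_row_same (i : Fin n) (j : Fin m) (a : Fin (na i j)) (q q' : Fin (σm j))
    (r : Fin (σp i)) (s : Fin (dy j)) :
    blKraus σp dx σm dy na V i j a q r ⟨j, (q', s)⟩ =
      if q' = q then blockEmb i r (V i j a s) else 0 := by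
  funext ⟨i', r', t⟩
  rcases eq_or_ne i' i with rfl | hi
  · rcases eq_or_ne r' r with rfl | hr
    · split_ifs <;> simp [blKraus, *]
    · split_ifs <;> simp [blKraus, blockEmb_apply_of_ne_snd, hr]
  · split_ifs <;> simp [blKraus, blockEmb_apply_of_ne_fst, hi]

lemma blKraus_mulVecLin (i : Fin n) (j : Fin m) (a : Fin (na i j)) (q : Fin (σm j))
    (r : Fin (σp i)) :
    (blKraus σp dx σm dy na V i j a q r).mulVecLin =
      blockEmb j q ∘ₗ (V i j a).mulVecLin ∘ₗ blockProj i r := by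
  refine LinearMap.ext fun f => funext fun ⟨j', q', s⟩ => ?_
  simp only [Matrix.mulVecLin_apply, LinearMap.comp_apply]
  rcases eq_or_ne j' j with rfl | hj
  · rcases eq_or_ne q' q with rfl | hq
    · simp [Matrix.mulVec, blKraus_row_same, blockEmb_dotProduct]
    · simp [Matrix.mulVec, blKraus_row_same, hq, blockEmb_apply_of_ne_snd]
  · simp [Matrix.mulVec, blKraus_row_of_ne _ _ _ _ _ _ hj, blockEmb_apply_of_ne_fst, hj]

lemma map_blKraus (U : Submodule ℝ (BLCol n σp dx → ℝ)) (i : Fin n) (j : Fin m)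
    (a : Fin (na i j)) (q : Fin (σm j)) (r : Fin (σp i)) :
    U.map (blKraus σp dx σm dy na V i j a q r).mulVecLin =
      ((U.map (blockProj i r)).map (V i j a).mulVecLin).map (blockEmb j q) := by
  rw [blKraus_mulVecLin, Submodule.map_comp, Submodule.map_comp]

lemma iSup_map_blKraus_eq_blockPi (U : Submodule ℝ (BLCol n σp dx → ℝ)) :
    ⨆ i, ⨆ j, ⨆ a : Fin (na i j), ⨆ q : Fin (σm j), ⨆ r : Fin (σp i),
        U.map (blKraus σp dx σm dy na V i j a q r).mulVecLin =
      blockPi (B := fun j => Fin (σm j))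
        fun j => ⨆ i, ⨆ a : Fin (na i j), (blockSpan U i).map (V i j a).mulVecLin := by
  simp only [blockPi_eq_iSup_map_blockEmb, blockSpan, Submodule.map_iSup, map_blKraus]
  apply le_antisymm
  · exact iSup_le fun i => iSup_le fun j => iSup_le fun a => iSup_le fun q => iSup_le fun r =>
      le_iSup_of_le j <| le_iSup_of_le q <| le_iSup_of_le i <| le_iSup_of_le a <|
        le_iSup_of_le r le_rfl
  · exact iSup_le fun j => iSup_le fun q => iSup_le fun i => iSup_le fun a => iSup_le fun r =>
      le_iSup_of_le i <| le_iSup_of_le j <| le_iSup_of_le a <| le_iSup_of_le q <|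
        le_iSup_of_le r le_rfl

end Kraus

theorem stmt16_general {n m : ℕ} (σp dx : Fin n → ℕ) (σm dy : Fin m → ℕ)
    (na : Fin n → Fin m → ℕ)
    (V : ∀ (i : Fin n) (j : Fin m), Fin (na i j) → Matrix (Fin (dy j)) (Fin (dx i)) ℝ) :
    ∀ z : ℤ,
      (∃ (Wx : ∀ i : Fin n, Submodule ℝ (Fin (dx i) → ℝ))
          (Wy : ∀ j : Fin m, Submodule ℝ (Fin (dy j) → ℝ)),
          (∀ i j (a : Fin (na i j)), (Wx i).map (V i j a).mulVecLin ≤ Wy j) ∧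
          z ≤ (∑ i, (σp i : ℤ) * Module.finrank ℝ (Wx i)) -
                (∑ j, (σm j : ℤ) * Module.finrank ℝ (Wy j))) ↔
      (∃ U : Submodule ℝ (BLCol n σp dx → ℝ),
          z ≤ (Module.finrank ℝ U : ℤ) -
            Module.finrank ℝ
              (⨆ i : Fin n, ⨆ j : Fin m, ⨆ a : Fin (na i j),
                ⨆ q : Fin (σm j), ⨆ r : Fin (σp i),
                  U.map (blKraus σp dx σm dy na V i j a q r).mulVecLin :
                Submodule ℝ (BLRow m σm dy → ℝ))) := by
  intro z
  constructor
  · rintro ⟨Wx, Wy, hV, hz⟩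
    refine ⟨blockPi Wx, hz.trans ?_⟩
    have hY := Submodule.finrank_mono <|
      (iSup_map_blKraus_eq_blockPi σp dx σm dy na V (blockPi Wx)).le.trans <|
        blockPi_mono fun j => iSup₂_le fun i a =>
          (Submodule.map_mono (blockSpan_blockPi_le Wx i)).trans (hV i j a)
    simp only [finrank_blockPi, Fintype.card_fin] at hY ⊢
    zify at hY
    push_cast
    linarith
  · rintro ⟨U, hz⟩
    refine ⟨blockSpan U, fun j => ⨆ i, ⨆ a, (blockSpan U i).map (V i j a).mulVecLin,
      fun i j a => le_iSup₂_of_le i a le_rfl, hz.trans ?_⟩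
    have hX := Submodule.finrank_mono (le_blockPi_blockSpan U)
    have hY := Submodule.finrank_mono (iSup_map_blKraus_eq_blockPi σp dx σm dy na V U).ge
    simp only [finrank_blockPi, Fintype.card_fin] at hX hY
    zify at hX hY
    linarith

/-- `disc(V,σ) = disc(A_{V,σ})`: the maximum of `σ · dim W` over subrepresentations `W ≤ V`
equals the maximum `c` for which a `c`-shrunk subspace for the Kraus operators exists;
stated via equality of the corresponding sets of lower bounds. -/
theorem stmt16 {n m : ℕ} (σp dx : Fin n → ℕ) (σm dy : Fin m → ℕ)
    (hσp : ∀ i, 0 < σp i) (hσm : ∀ j, 0 < σm j)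
    (hbal : ∑ i, σp i * dx i = ∑ j, σm j * dy j)
    (na : Fin n → Fin m → ℕ)
    (V : ∀ (i : Fin n) (j : Fin m), Fin (na i j) → Matrix (Fin (dy j)) (Fin (dx i)) ℝ) :
    ∀ z : ℤ,
      (∃ (Wx : ∀ i : Fin n, Submodule ℝ (Fin (dx i) → ℝ))
          (Wy : ∀ j : Fin m, Submodule ℝ (Fin (dy j) → ℝ)),
          (∀ i j (a : Fin (na i j)), (Wx i).map (V i j a).mulVecLin ≤ Wy j) ∧
          z ≤ (∑ i, (σp i : ℤ) * Module.finrank ℝ (Wx i)) -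
                (∑ j, (σm j : ℤ) * Module.finrank ℝ (Wy j))) ↔
      (∃ U : Submodule ℝ (BLCol n σp dx → ℝ),
          z ≤ (Module.finrank ℝ U : ℤ) -
            Module.finrank ℝ
              (⨆ i : Fin n, ⨆ j : Fin m, ⨆ a : Fin (na i j),
                ⨆ q : Fin (σm j), ⨆ r : Fin (σp i),
                  U.map (blKraus σp dx σm dy na V i j a q r).mulVecLin :
                Submodule ℝ (BLRow m σm dy → ℝ))) :=
  stmt16_general σp dx σm dy na V
end

section
/- In the SRSR setup, suppose (T'_1,...,T'_m) is a tuple of subspaces T'_j ≤ ℝ^{d_j} with corresponding subrepresentation W' of V_X. Let Y' be the N×N diagonal 0/1 matrix whose r-th diagonal entry is 1 iff r ∈ ((i−1)D, iD] for some i with v_i^j ∈ T'_j for all j. Then Y' is positive semi-definite and rank(Y') − rank(T_X(Y')) ≥ σ_0 · dim W' = D·|I_{T'}| − n·Σ_j dim T'_j, where I_{T'} = {i : v_i^j ∈ T'_j ∀j}. -/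
/-!
`Y'` is the diagonal projection onto the column blocks `i ∈ I_{T'}`, so its rank is `D·|I_{T'}|`.
The Kraus operator `V^{i,j}_{q,r}` sends a vector `z` to `z_{(i,r)} v_i^j` placed in the row
block `(j, q)`, and `Y'` kills the coordinates `(i, r)` with `i ∉ I_{T'}`. Hence every column of
`T_X(Y')` has its `(j, q)`-block in `T'_j`, and these vectors form a space of dimension
`n · Σ_j dim T'_j`.
-/

open Matrix BigOperators
open scoped Classical

lemma Matrix.eq_diagonal_of_apply {ι R : Type*} [DecidableEq ι] [Zero R] [One R]
    {P : ι → Prop} [DecidablePred P] (Y : Matrix ι ι R)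
    (hY : ∀ p c, Y p c = if p = c ∧ P p then 1 else 0) :
    Y = diagonal fun c => if P c then 1 else 0 := by
  ext p c
  rw [hY, diagonal_apply]
  by_cases h : p = c
  · subst h; simp
  · simp [h]

lemma Matrix.rank_diagonal_indicator_fst {ι κ K : Type*} [Fintype ι] [Fintype κ]
    [DecidableEq ι] [DecidableEq κ] [Field K] (s : Finset ι) :
    (diagonal fun c : ι × κ => if c.1 ∈ s then (1 : K) else 0).rank =
      s.card * Fintype.card κ := by
  rw [rank_diagonal, Fintype.card_subtype]
  simp only [ne_eq, ite_eq_right_iff, one_ne_zero, imp_false, not_not]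
  rw [show (Finset.univ.filter fun c : ι × κ => c.1 ∈ s) = s ×ˢ Finset.univ by ext; simp]
  simp

section Blocks

variable {n m D : ℕ} {d : Fin m → ℕ} (T' : ∀ j : Fin m, Submodule ℝ (Fin (d j) → ℝ))

def blockEmbed : (∀ x : Fin m × Fin n, T' x.1) →ₗ[ℝ] (SrsrRow n m d → ℝ) where
  toFun f p := (f (p.1, p.2.1) : Fin (d p.1) → ℝ) p.2.2
  map_add' _ _ := rfl
  map_smul' _ _ := rfl

variable {T'}

lemma mem_range_blockEmbed {x : SrsrRow n m d → ℝ}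
    (hx : ∀ j q, (fun k => x ⟨j, (q, k)⟩) ∈ T' j) : x ∈ LinearMap.range (blockEmbed T') :=
  ⟨fun y => ⟨_, hx y.1 y.2⟩, rfl⟩

lemma finrank_range_blockEmbed_le :
    Module.finrank ℝ (LinearMap.range (blockEmbed (n := n) T')) ≤
      n * ∑ j, Module.finrank ℝ (T' j) := by
  refine (LinearMap.finrank_range_le _).trans_eq ?_
  rw [Module.finrank_pi_fintype, Fintype.sum_prod_type, Finset.mul_sum]
  refine Finset.sum_congr rfl fun j _ => ?_
  -- the summand still mentions `q` through `(j, q).1` inside instance arguments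
  show ∑ _q : Fin n, Module.finrank ℝ (T' j) = _
  simp

end Blocks

section Kraus

variable {n m D : ℕ} {d : Fin m → ℕ} (v : ∀ (_ : Fin n) (j : Fin m), Fin (d j) → ℝ)

lemma srsrKraus_mulVec_apply (i : Fin n) (j : Fin m) (q : Fin n) (r : Fin D)
    (z : SrsrCol n D → ℝ) (p : SrsrRow n m d) :
    (srsrKraus d v i j q r *ᵥ z) p =
      if p.1 = j ∧ p.2.1 = q then z (i, r) * v i p.1 p.2.2 else 0 := by
  rw [mulVec, dotProduct, Finset.sum_eq_single (i, r)]
  · obtain ⟨j', q', k⟩ := p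
    by_cases h : j' = j ∧ q' = q
    · obtain ⟨rfl, rfl⟩ := h
      simp [srsrKraus, mul_comm]
    · simp [srsrKraus, h]
  · intro b _ hb
    simp [srsrKraus, Prod.ext_iff.not.mp hb]
  · simp

variable {T' : ∀ j : Fin m, Submodule ℝ (Fin (d j) → ℝ)}

lemma srsrKraus_mulVec_mem_range_blockEmbed (i : Fin n) (j : Fin m) (q : Fin n) (r : Fin D)
    (z : SrsrCol n D → ℝ) (hz : z (i, r) ≠ 0 → ∀ j, v i j ∈ T' j) :
    srsrKraus d v i j q r *ᵥ z ∈ LinearMap.range (blockEmbed (n := n) T') := by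
  refine mem_range_blockEmbed fun j' q' => ?_
  simp only [srsrKraus_mulVec_apply]
  by_cases h : (j' = j ∧ q' = q) ∧ z (i, r) ≠ 0
  · convert (T' j').smul_mem (z (i, r)) (hz h.2 j') using 1
    ext k
    simp [h.1]
  · convert zero_mem (T' j') using 1
    ext k
    rw [not_and_or, not_not] at h
    rcases h with h | h <;> simp [h]

lemma srsrCPO_mulVec_mem_range_blockEmbed (Y : Matrix (SrsrCol n D) (SrsrCol n D) ℝ)
    (hY : ∀ i r c, Y (i, r) c ≠ 0 → ∀ j, v i j ∈ T' j) (y : SrsrRow n m d → ℝ) :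
    srsrCPO d v Y *ᵥ y ∈ LinearMap.range (blockEmbed (n := n) T') := by
  simp only [srsrCPO, Matrix.sum_mulVec, ← Matrix.mulVec_mulVec]
  refine Submodule.sum_mem _ fun i _ => Submodule.sum_mem _ fun j _ =>
    Submodule.sum_mem _ fun q _ => Submodule.sum_mem _ fun r _ =>
      srsrKraus_mulVec_mem_range_blockEmbed v i j q r _ fun hz => ?_
  obtain ⟨c, -, hc⟩ := Finset.exists_ne_zero_of_sum_ne_zero hz
  exact hY i r c (left_ne_zero_of_mul hc)

lemma rank_srsrCPO_le (Y : Matrix (SrsrCol n D) (SrsrCol n D) ℝ)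
    (hY : ∀ i r c, Y (i, r) c ≠ 0 → ∀ j, v i j ∈ T' j) :
    (srsrCPO d v Y).rank ≤ n * ∑ j, Module.finrank ℝ (T' j) := by
  refine le_trans (Submodule.finrank_mono ?_) finrank_range_blockEmbed_le
  rintro _ ⟨y, rfl⟩
  exact srsrCPO_mulVec_mem_range_blockEmbed v Y hY y

end Kraus

theorem stmt17_general {n m D : ℕ} (d : Fin m → ℕ)
    (v : ∀ (_ : Fin n) (j : Fin m), Fin (d j) → ℝ)
    (T' : ∀ j : Fin m, Submodule ℝ (Fin (d j) → ℝ))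
    (I' : Finset (Fin n))
    (hI' : I' = Finset.univ.filter fun i : Fin n => ∀ j, v i j ∈ T' j)
    (Y' : Matrix (SrsrCol n D) (SrsrCol n D) ℝ)
    (hY' : ∀ p c : SrsrCol n D,
      Y' p c = if p = c ∧ p.1 ∈ I' then (1 : ℝ) else 0) :
    Y'.PosSemidef ∧
      (D : ℤ) * I'.card - n * (∑ j, (Module.finrank ℝ (T' j) : ℤ)) ≤
        (Y'.rank : ℤ) - (srsrCPO d v Y').rank := by
  have hdiag : Y' = diagonal fun c : SrsrCol n D => if c.1 ∈ I' then 1 else 0 :=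
    Matrix.eq_diagonal_of_apply Y' hY'
  have hrows : ∀ i r c, Y' (i, r) c ≠ 0 → ∀ j, v i j ∈ T' j := fun i r c h => by
    rw [hY'] at h
    simpa [hI'] using (ite_ne_right_iff.mp h).1.2
  have hrankY : Y'.rank = I'.card * D := by
    rw [hdiag, Matrix.rank_diagonal_indicator_fst, Fintype.card_fin]
  have hrankT : ((srsrCPO d v Y').rank : ℤ) ≤ n * ∑ j, (Module.finrank ℝ (T' j) : ℤ) := by
    exact_mod_cast rank_srsrCPO_le v Y' hrows
  refine ⟨?_, ?_⟩
  · rw [hdiag]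
    exact posSemidef_diagonal_iff.mpr fun c => by split_ifs <;> norm_num
  · rw [hrankY]
    push_cast
    linarith

theorem stmt17 {n m D : ℕ} (d : Fin m → ℕ) (hD : D = ∑ j, d j)
    (v : ∀ (_ : Fin n) (j : Fin m), Fin (d j) → ℝ)
    (T' : ∀ j : Fin m, Submodule ℝ (Fin (d j) → ℝ))
    (I' : Finset (Fin n))
    (hI' : I' = Finset.univ.filter fun i : Fin n => ∀ j, v i j ∈ T' j)
    (Y' : Matrix (SrsrCol n D) (SrsrCol n D) ℝ)
    (hY' : ∀ p c : SrsrCol n D,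
      Y' p c = if p = c ∧ p.1 ∈ I' then (1 : ℝ) else 0) :
    Y'.PosSemidef ∧
      (D : ℤ) * I'.card - n * (∑ j, (Module.finrank ℝ (T' j) : ℤ)) ≤
        (Y'.rank : ℤ) - (srsrCPO d v Y').rank :=
  stmt17_general d v T' I' hI' Y' hY'
end

section
/- Let A_1,...,A_ℓ ∈ ℝ^{N×N} each of rank one, so that the matrix space span{A_i} has the Edmonds–Rado property. Then: if some B ∈ span{A_i} is invertible (corank 0 maximal rank), there is no shrunk subspace for {A_1,...,A_ℓ}; conversely, if every B ∈ span{A_i} is singular, then (assuming the Edmonds–Rado property, i.e. ncrank = rank for rank-one spanned spaces) there exists a shrunk subspace U, i.e. dim U > dim(Σ_i A_i(U)). -/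
/-!
Write each `A i` as `x ↦ φ i x • u i`. If `B = ∑ α i • A i` is invertible, then `B(U)` has the
dimension of `U` and lies in `∑ A i (U)`, so no subspace is shrunk.

Conversely, `∑_{i ∈ S} A i` is invertible as soon as both `u` and `φ` are linearly independent
on `S` and `|S| = N`. Such an `S` is a common independent set of the two linear matroids
represented by `u` and `φ`. If there is none, Edmonds' matroid intersection theorem gives some
`T` with `rank u(T) + rank φ(Tᶜ) < N`. The common kernel `U` of the `φ i` with `i ∉ T` then has
dimension at least `N - rank φ(Tᶜ)`, while `∑ A i (U)` lies in the span of `u(T)`, so `U` is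
shrunk.
-/

open Module Submodule Function

section LinearMatroid

variable {K V ι : Type*} [DivisionRing K] [AddCommGroup V] [Module K V] [FiniteDimensional K V]

theorem Submodule.finrank_map_mkQ_add_finrank (p q : Submodule K V) :
    finrank K (q.map p.mkQ) + finrank K p = finrank K ↥(q ⊔ p) := by
  have hker : LinearMap.ker (p.mkQ ∘ₗ q.subtype) = (q ⊓ p).comap q.subtype := by
    rw [LinearMap.ker_comp, ker_mkQ, comap_inf, comap_subtype_self, top_inf_eq]
  have hrank := LinearMap.finrank_range_add_finrank_ker (p.mkQ ∘ₗ q.subtype)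
  rw [LinearMap.range_comp, range_subtype, hker,
    (comapSubtypeEquivOfLe inf_le_left).finrank_eq] at hrank
  have := finrank_sup_add_finrank_inf_eq q p
  omega

variable (K) in
theorem finrank_span_image_union_add_inter_le (b : ι → V) (X Y : Set ι) :
    finrank K (span K (b '' (X ∪ Y))) + finrank K (span K (b '' (X ∩ Y))) ≤
      finrank K (span K (b '' X)) + finrank K (span K (b '' Y)) := by
  rw [Set.image_union, span_union, ← finrank_sup_add_finrank_inf_eq (span K (b '' X))]
  gcongr
  exact Submodule.finrank_mono <| le_inf (span_mono <| Set.image_mono Set.inter_subset_left)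
    (span_mono <| Set.image_mono Set.inter_subset_right)

variable (K) in
theorem finrank_span_image_insert {b : ι → V} {e : ι} (he : b e ≠ 0) (T : Set ι) :
    finrank K (span K (b '' insert e T)) =
      finrank K (span K ((span K {b e}).mkQ ∘ b '' T)) + 1 := by
  rw [Set.image_comp, span_image, Set.image_insert_eq, span_insert, sup_comm,
    ← finrank_map_mkQ_add_finrank, finrank_span_singleton he]

variable {W : Type*} [AddCommGroup W] [Module K W] [FiniteDimensional K W] [DecidableEq ι]

/-- The contraction step: once deleting `e` breaks the bound at `T₁`, submodularity shows that
contracting `e` keeps it, with `k` replaced by `k - 1`. -/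
theorem lt_finrank_span_image_insert_add_of_lt {b : ι → V} {c : ι → W} {e : ι}
    {E T₁ T₂ : Finset ι} {k : ℕ} (he : e ∉ E) (hT₁ : T₁ ⊆ E) (hT₂ : T₂ ⊆ E)
    (h : ∀ T ⊆ insert e E,
      k ≤ finrank K (span K (b '' T)) + finrank K (span K (c '' ↑(insert e E \ T))))
    (hT₁k : finrank K (span K (b '' T₁)) + finrank K (span K (c '' ↑(E \ T₁))) < k) :
    k < finrank K (span K (b '' insert e ↑T₂)) + finrank K (span K (c '' insert e ↑(E \ T₂))) := by
  have hinter := h (T₁ ∩ T₂) (by grind)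
  have hunion := h (insert e (T₁ ∪ T₂)) (by grind)
  have hb := finrank_span_image_union_add_inter_le K b T₁ (insert e T₂)
  have hc := finrank_span_image_union_add_inter_le K c ↑(E \ T₁) (insert e ↑(E \ T₂))
  have h₁ : (T₁ : Set ι) ∪ insert e ↑T₂ = ↑(insert e (T₁ ∪ T₂)) := by push_cast; grind
  have h₂ : (T₁ : Set ι) ∩ insert e ↑T₂ = ↑(T₁ ∩ T₂) := by push_cast; grind
  have h₃ : ↑(E \ T₁) ∪ insert e ↑(E \ T₂) = (↑(insert e E \ (T₁ ∩ T₂)) : Set ι) := by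
    push_cast; grind
  have h₄ : ↑(E \ T₁) ∩ insert e ↑(E \ T₂) = (↑(insert e E \ insert e (T₁ ∪ T₂)) : Set ι) := by
    push_cast; grind
  rw [h₁, h₂] at hb
  rw [h₃, h₄] at hc
  omega

/-- Edmonds' matroid intersection theorem for the linear matroids represented by `b` and `c`,
by deletion and contraction of one element. -/
theorem exists_finrank_span_image_eq_card_of_le_finrank_add_finrank (b : ι → V) (c : ι → W)
    (E : Finset ι) (k : ℕ)
    (h : ∀ T ⊆ E, k ≤ finrank K (span K (b '' T)) + finrank K (span K (c '' ↑(E \ T)))) :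
    ∃ S ⊆ E, k ≤ S.card ∧ finrank K (span K (b '' S)) = S.card ∧
      finrank K (span K (c '' S)) = S.card := by
  induction E using Finset.induction_on generalizing V W k with
  | empty =>
    have h₀ := h ∅ subset_rfl
    rw [Finset.coe_empty, Set.image_empty, span_empty, finrank_bot, Finset.sdiff_self,
      Finset.coe_empty, Set.image_empty, span_empty, finrank_bot] at h₀
    exact ⟨∅, subset_rfl, h₀, by simp, by simp⟩
  | insert e E he ih =>
    by_cases hdel : ∀ T ⊆ E,
        k ≤ finrank K (span K (b '' T)) + finrank K (span K (c '' ↑(E \ T)))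
    · obtain ⟨S, hS, hkS, hbS, hcS⟩ := ih b c k hdel
      exact ⟨S, hS.trans (Finset.subset_insert e E), hkS, hbS, hcS⟩
    push Not at hdel
    obtain ⟨T₁, hT₁, hT₁k⟩ := hdel
    have hbe : b e ≠ 0 := by
      intro hb0
      have := h (insert e T₁) (Finset.insert_subset_insert e hT₁)
      rw [Finset.coe_insert, Set.image_insert_eq, hb0, span_insert_zero,
        Finset.insert_sdiff_insert, Finset.sdiff_insert_of_notMem he] at this
      omega
    have hce : c e ≠ 0 := by
      intro hc0
      have := h T₁ (hT₁.trans (Finset.subset_insert e E))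
      rw [Finset.insert_sdiff_of_notMem _ (fun h => he (hT₁ h)), Finset.coe_insert,
        Set.image_insert_eq, hc0, span_insert_zero] at this
      omega
    obtain ⟨k, rfl⟩ : ∃ k', k = k' + 1 := ⟨k - 1, by omega⟩
    obtain ⟨S, hS, hkS, hbS, hcS⟩ := ih ((span K {b e}).mkQ ∘ b) ((span K {c e}).mkQ ∘ c) k
      fun T₂ hT₂ => by
        have := lt_finrank_span_image_insert_add_of_lt he hT₁ hT₂ h hT₁k
        rw [finrank_span_image_insert K hbe, finrank_span_image_insert K hce] at this
        omega
    have heS : e ∉ S := fun h => he (hS h)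
    refine ⟨insert e S, Finset.insert_subset_insert e hS, ?_, ?_, ?_⟩
    · rw [Finset.card_insert_of_notMem heS]
      omega
    · rw [Finset.coe_insert, finrank_span_image_insert K hbe, hbS,
        Finset.card_insert_of_notMem heS]
    · rw [Finset.coe_insert, finrank_span_image_insert K hce, hcS,
        Finset.card_insert_of_notMem heS]

end LinearMatroid

section RankOne

variable {K V W ι : Type*} [Field K] [AddCommGroup V] [Module K V] [FiniteDimensional K V]
  [AddCommGroup W] [Module K W]

theorem LinearMap.exists_eq_smulRight_of_finrank_range_eq_one {f : V →ₗ[K] W}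
    (hf : finrank K (LinearMap.range f) = 1) : ∃ (φ : Dual K V) (u : W), f = φ.smulRight u := by
  let e : LinearMap.range f ≃ₗ[K] K :=
    LinearEquiv.ofFinrankEq _ _ (hf.trans (finrank_self K).symm)
  refine ⟨e.toLinearMap ∘ₗ f.rangeRestrict, e.symm 1, LinearMap.ext fun x => ?_⟩
  have : f.rangeRestrict x = e (f.rangeRestrict x) • e.symm 1 := by
    rw [← map_smul, smul_eq_mul, mul_one, LinearEquiv.symm_apply_apply]
  simpa using congrArg Subtype.val this

theorem LinearMap.exists_eq_smulRight_of_finrank_range_le_one (f : V →ₗ[K] W)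
    (hf : finrank K (LinearMap.range f) ≤ 1) : ∃ (φ : Dual K V) (u : W), f = φ.smulRight u := by
  rcases hf.lt_or_eq with hf | hf
  · refine ⟨0, 0, ?_⟩
    rw [Nat.lt_one_iff, finrank_eq_zero, LinearMap.range_eq_bot] at hf
    rw [hf, LinearMap.smulRight_zero]
  · exact exists_eq_smulRight_of_finrank_range_eq_one hf

theorem finrank_le_finrank_iSup_map_of_injective [Fintype ι] [FiniteDimensional K W]
    (f : ι → V →ₗ[K] W) (α : ι → K) (hα : Injective ⇑(∑ i, α i • f i)) (U : Submodule K V) :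
    finrank K U ≤ finrank K ↥(⨆ i, U.map (f i)) := by
  refine (equivMapOfInjective _ hα U).finrank_eq.trans_le
    (Submodule.finrank_mono (map_le_iff_le_comap.mpr fun x hx => ?_))
  simp only [mem_comap, LinearMap.coe_sum, LinearMap.coe_smul, Finset.sum_apply, Pi.smul_apply]
  exact sum_mem fun i _ => smul_mem _ _ (mem_iSup_of_mem i (mem_map_of_mem hx))

variable {φ : ι → Dual K V} {u : ι → W}

theorem finrank_le_finrank_span_add_finrank_span_compl [FiniteDimensional K W]
    (h : ∀ U : Submodule K V, finrank K U ≤ finrank K ↥(⨆ i, U.map ((φ i).smulRight (u i))))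
    (T : Set ι) :
    finrank K V ≤ finrank K (span K (u '' T)) + finrank K (span K (φ '' Tᶜ)) := by
  have hU := Subspace.finrank_add_finrank_dualCoannihilator_eq (span K (φ '' Tᶜ))
  set U := (span K (φ '' Tᶜ)).dualCoannihilator
  have hle : (⨆ i, U.map ((φ i).smulRight (u i))) ≤ span K (u '' T) := by
    refine iSup_le fun i => map_le_iff_le_comap.mpr fun x hx => ?_
    rw [mem_comap, LinearMap.smulRight_apply]
    by_cases hi : i ∈ T
    · exact smul_mem _ _ (subset_span (Set.mem_image_of_mem u hi))
    · rw [(mem_dualCoannihilator x).mp hx (φ i) (subset_span (Set.mem_image_of_mem φ hi)),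
        zero_smul]
      exact zero_mem _
  have := (h U).trans (Submodule.finrank_mono hle)
  omega

theorem injective_sum_smulRight_of_finrank_span_eq_card (S : Finset ι)
    (hu : finrank K (span K (u '' S)) = S.card)
    (hφ : finrank K V ≤ finrank K (span K (φ '' S))) :
    Injective ⇑(∑ i ∈ S, (φ i).smulRight (u i)) := by
  have hu' : LinearIndepOn K u S := by
    rw [LinearIndepOn, linearIndependent_iff_card_eq_finrank_span, ← Set.image_eq_range,
      Set.finrank, hu]
    simp
  have hφ' : span K (φ '' S) = ⊤ :=
    eq_top_of_finrank_eq ((finrank_le _).antisymm (Subspace.dual_finrank_eq.trans_le hφ))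
  rw [← LinearMap.ker_eq_bot, LinearMap.ker_eq_bot']
  intro x hx
  have hcoef : ∀ i ∈ S, φ i x = 0 :=
    linearIndepOn_iff'.mp hu' S (fun i => φ i x) subset_rfl (by simpa using hx)
  have : ⊤ ≤ LinearMap.ker (Dual.eval K V x) := by
    rw [← hφ', span_le]
    rintro _ ⟨i, hi, rfl⟩
    exact hcoef i hi
  exact (forall_dual_apply_eq_zero_iff K x).mp fun ψ => this mem_top

theorem exists_injective_sum_smul_iff_forall_finrank_le_finrank_iSup_map [Fintype ι]
    [FiniteDimensional K W] (f : ι → V →ₗ[K] W)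
    (hf : ∀ i, finrank K (LinearMap.range (f i)) ≤ 1) :
    (∃ α : ι → K, Injective ⇑(∑ i, α i • f i)) ↔
      ∀ U : Submodule K V, finrank K U ≤ finrank K ↥(⨆ i, U.map (f i)) := by
  refine ⟨fun ⟨α, hα⟩ => finrank_le_finrank_iSup_map_of_injective f α hα, fun h => ?_⟩
  classical
  choose φ u hfu using fun i => (f i).exists_eq_smulRight_of_finrank_range_le_one (hf i)
  obtain rfl : f = fun i => (φ i).smulRight (u i) := funext hfu
  obtain ⟨S, -, hkS, huS, hφS⟩ :=
    exists_finrank_span_image_eq_card_of_le_finrank_add_finrank u φ Finset.univ (finrank K V)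
      fun T _ => by
        rw [← Finset.compl_eq_univ_sdiff, Finset.coe_compl]
        exact finrank_le_finrank_span_add_finrank_span_compl h T
  refine ⟨fun i => if i ∈ S then 1 else 0, ?_⟩
  simpa [ite_smul, Finset.sum_ite_mem] using
    injective_sum_smulRight_of_finrank_span_eq_card S huS (hkS.trans hφS.ge)

end RankOne

theorem Matrix.rank_eq_card_iff_injective_mulVecLin {K n : Type*} [Field K] [Fintype n]
    (B : Matrix n n K) : B.rank = Fintype.card n ↔ Injective B.mulVecLin := by
  have := LinearMap.finrank_range_add_finrank_ker B.mulVecLin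
  rw [Module.finrank_fintype_fun_eq_card] at this
  rw [← LinearMap.ker_eq_bot, ← Submodule.finrank_eq_zero, Matrix.rank]
  omega

theorem Matrix.mulVecLin_sum_smul {R m n ι : Type*} [CommSemiring R] [Fintype n] [Fintype ι]
    (α : ι → R) (A : ι → Matrix m n R) :
    (∑ i, α i • A i).mulVecLin = ∑ i, α i • (A i).mulVecLin := by
  classical
  simp only [← Matrix.toLin'_apply', map_sum, map_smul]

theorem stmt19 {N ℓ : ℕ} (A : Fin ℓ → Matrix (Fin N) (Fin N) ℝ)
    (hrk : ∀ i, (A i).rank = 1) :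
    (∃ α : Fin ℓ → ℝ, (∑ i, α i • A i).rank = N) ↔
      ¬ ∃ U : Submodule ℝ (Fin N → ℝ),
          Module.finrank ℝ (⨆ i, U.map (A i).mulVecLin : Submodule ℝ (Fin N → ℝ)) <
            Module.finrank ℝ U := by
  have hrank (α : Fin ℓ → ℝ) :
      (∑ i, α i • A i).rank = N ↔ Injective ⇑(∑ i, α i • (A i).mulVecLin) := by
    rw [← Matrix.mulVecLin_sum_smul, ← Matrix.rank_eq_card_iff_injective_mulVecLin,
      Fintype.card_fin]
  simp only [hrank, not_exists, not_lt]
  exact exists_injective_sum_smul_iff_forall_finrank_le_finrank_iSup_map _ fun i => (hrk i).le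
end
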